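/- arXiv:1905.12364 — 9 statements merged into one kernel-verified Lean document; each statement's English description precedes it below -/
import Mathlib

section
/- For any permutation σ ∈ S_n, the number of distinct permutations π ∈ S_{n−1} contained in σ (obtainable by deleting one entry of σ and standardizing) equals n − β(σ), where β(σ) is the number of bonds of σ. -/
/-- The entry at position `k` of `σ` (0-indexed) is a *vertical separator*:
there are positions `j, j+1, j+2` with `k = j+1` and `|σ j - σ (j+2)| = 1`. -/
def IsVSepPos {n : ℕ} (σ : Equiv.Perm (Fin n)) (k : Fin n) : Prop :=
  ∃ (j : ℕ) (h : j + 2 < n), (k : ℕ) = j + 1 ∧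
    (((σ ⟨j, by omega⟩).val : ℤ) - ((σ ⟨j + 2, h⟩).val : ℤ)).natAbs = 1

/-- The value `b` is a vertical separator of `σ`. -/
def IsVSepVal {n : ℕ} (σ : Equiv.Perm (Fin n)) (b : Fin n) : Prop :=
  IsVSepPos σ (σ⁻¹ b)

/-- The value `a` is a *horizontal separator* of `σ`: the values `a-1` and `a+1`
occupy adjacent positions of `σ` (their sum is `2a` and they differ by `2`). -/
def IsHSepVal {n : ℕ} (σ : Equiv.Perm (Fin n)) (a : Fin n) : Prop :=
  ∃ (j : ℕ) (h : j + 1 < n),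
    (((σ ⟨j, by omega⟩).val : ℤ) - ((σ ⟨j + 1, h⟩).val : ℤ)).natAbs = 2 ∧
    ((σ ⟨j, by omega⟩).val : ℤ) + ((σ ⟨j + 1, h⟩).val : ℤ) = 2 * (a : ℤ)

/-- `σ` has a bond at positions `j, j+1`. -/
def PermBondAt {n : ℕ} (σ : Equiv.Perm (Fin n)) (j : ℕ) (h : j + 1 < n) : Prop :=
  (((σ ⟨j, by omega⟩).val : ℤ) - ((σ ⟨j + 1, h⟩).val : ℤ)).natAbs = 1

/-- The sequence obtained from `σ` by deleting the entry at position `p`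
and standardizing. -/
def delSeq {n : ℕ} (σ : Equiv.Perm (Fin n)) (p : Fin n) : Fin (n - 1) → ℕ :=
  fun k =>
    let q : Fin n :=
      if (k : ℕ) < (p : ℕ) then ⟨k, by have := k.isLt; omega⟩
      else ⟨(k : ℕ) + 1, by have := k.isLt; omega⟩
    if (σ q).val < (σ p).val then (σ q).val else (σ q).val - 1

/-- A sequence has a bond at positions `j, j+1`. -/
def SeqBondAt {m : ℕ} (g : Fin m → ℕ) (j : ℕ) (h : j + 1 < m) : Prop :=
  ((g ⟨j, by omega⟩ : ℤ) - (g ⟨j + 1, h⟩ : ℤ)).natAbs = 1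

/-- The number of bonds of a sequence. -/
noncomputable def seqBondCount {m : ℕ} (g : Fin m → ℕ) : ℕ :=
  Nat.card {p : Fin m × Fin m //
    (p.2 : ℕ) = (p.1 : ℕ) + 1 ∧ ((g p.1 : ℤ) - (g p.2 : ℤ)).natAbs = 1}

/-- The number of bonds of `σ`. -/
noncomputable def bondCount {n : ℕ} (σ : Equiv.Perm (Fin n)) : ℕ :=
  Nat.card {p : Fin n × Fin n //
    (p.2 : ℕ) = (p.1 : ℕ) + 1 ∧ (((σ p.1).val : ℤ) - ((σ p.2).val : ℤ)).natAbs = 1}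

lemma val_ne_of_ne {n : ℕ} (σ : Equiv.Perm (Fin n)) {x y : Fin n} (h : x ≠ y) :
    (σ x).val ≠ (σ y).val := fun hv => h (σ.injective (Fin.ext hv))

lemma delSeq_lt' {n : ℕ} (σ : Equiv.Perm (Fin n)) (p : Fin n) (k : Fin (n-1))
    (q : Fin n) (hq : (q : ℕ) = (k : ℕ)) (hkp : (k : ℕ) < (p : ℕ)) :
    delSeq σ p k = if (σ q).val < (σ p).val then (σ q).val else (σ q).val - 1 := by
  have hq' : q = ⟨(k:ℕ), by have := k.isLt; omega⟩ := Fin.ext hq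
  rw [hq']
  simp [delSeq, hkp]

lemma delSeq_ge' {n : ℕ} (σ : Equiv.Perm (Fin n)) (p : Fin n) (k : Fin (n-1))
    (q : Fin n) (hq : (q : ℕ) = (k : ℕ) + 1) (hkp : ¬ (k : ℕ) < (p : ℕ)) :
    delSeq σ p k = if (σ q).val < (σ p).val then (σ q).val else (σ q).val - 1 := by
  have hq' : q = ⟨(k:ℕ)+1, by have := k.isLt; omega⟩ := Fin.ext hq
  rw [hq']
  simp [delSeq, hkp]

lemma stdc (a a' c : ℕ) (h1 : c ≠ a) (h2 : c ≠ a')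
    (hb : ((a : ℤ) - (a' : ℤ)).natAbs = 1) :
    (if c < a then c else c - 1) = (if c < a' then c else c - 1) := by
  split_ifs <;> omega

lemma stds (a a' : ℕ) (hne : a ≠ a') (hb : ((a : ℤ) - (a' : ℤ)).natAbs = 1) :
    (if a' < a then a' else a' - 1) = (if a < a' then a else a - 1) := by
  split_ifs <;> omega

lemma bback (a b c : ℕ) (hca : c ≠ a) (hab : a ≠ b)
    (hk : (if a < b then a else a - 1) = (if c < a then c else c - 1)) :
    ((c : ℤ) - (a : ℤ)).natAbs = 1 := by
  split_ifs at hk <;> omega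

lemma lemA {n : ℕ} (σ : Equiv.Perm (Fin n)) (j : ℕ) (h : j + 1 < n)
    (hb : PermBondAt σ j h) :
    delSeq σ ⟨j, by omega⟩ = delSeq σ ⟨j+1, h⟩ := by
  unfold PermBondAt at hb
  funext k
  have hk := k.isLt
  rcases lt_trichotomy (k:ℕ) j with hkj | hkj | hkj
  · rw [delSeq_lt' σ _ k ⟨(k:ℕ), by omega⟩ rfl hkj,
        delSeq_lt' σ _ k ⟨(k:ℕ), by omega⟩ rfl (show (k:ℕ) < j+1 by omega)]
    exact stdc _ _ _
      (val_ne_of_ne σ (by simp [Fin.ext_iff]; omega))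
      (val_ne_of_ne σ (by simp [Fin.ext_iff]; omega)) hb
  · rw [delSeq_ge' σ _ k ⟨j+1, h⟩ (by simp [hkj]) (show ¬ (k:ℕ) < j by omega),
        delSeq_lt' σ _ k ⟨j, by omega⟩ (by simp [hkj]) (show (k:ℕ) < j+1 by omega)]
    exact stds _ _ (val_ne_of_ne σ (by simp [Fin.ext_iff])) hb
  · rw [delSeq_ge' σ _ k ⟨(k:ℕ)+1, by omega⟩ rfl (show ¬ (k:ℕ) < j by omega),
        delSeq_ge' σ _ k ⟨(k:ℕ)+1, by omega⟩ rfl (show ¬ (k:ℕ) < j+1 by omega)]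
    exact stdc _ _ _
      (val_ne_of_ne σ (by simp [Fin.ext_iff]; omega))
      (val_ne_of_ne σ (by simp [Fin.ext_iff]; omega)) hb

lemma lemB {n : ℕ} (σ : Equiv.Perm (Fin n)) (p q : Fin n) (hlt : q < p)
    (heq : delSeq σ q = delSeq σ p) :
    ∃ (j : ℕ) (h : j + 1 < n), (p : ℕ) = j + 1 ∧ PermBondAt σ j h := by
  have hq := Fin.lt_def.mp hlt
  have hpn := p.isLt
  refine ⟨(p:ℕ)-1, by omega, by omega, ?_⟩
  unfold PermBondAt
  have e : ∀ (hh : (p:ℕ)-1+1 < n), (σ (⟨(p:ℕ)-1+1, hh⟩ : Fin n)).val = (σ p).val :=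
    fun hh => congrArg Fin.val (congrArg σ (Fin.ext (by simp; omega)))
  rw [e]
  have hk := congrFun heq (⟨(p:ℕ)-1, by omega⟩ : Fin (n-1))
  rw [delSeq_ge' σ q (⟨(p:ℕ)-1, by omega⟩ : Fin (n-1)) p (by simp; omega) (by simp; omega),
      delSeq_lt' σ p (⟨(p:ℕ)-1, by omega⟩ : Fin (n-1)) ⟨(p:ℕ)-1, by omega⟩ (by simp) (by simp; omega)] at hk
  exact bback _ _ _
    (val_ne_of_ne σ (by simp [Fin.ext_iff]; omega))
    (val_ne_of_ne σ (by simp [Fin.ext_iff]; omega)) hk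

lemma ncard_range_eq_card_firstOcc {α : Type*} {n : ℕ} (f : Fin n → α) :
    Set.ncard (Set.range f) = Nat.card {p : Fin n // ∀ q, q < p → f q ≠ f p} := by
  classical
  have hrange : Set.range f = f '' {p : Fin n | ∀ q, q < p → f q ≠ f p} := by
    apply Set.Subset.antisymm
    · rintro y ⟨p, rfl⟩
      have hne : (Finset.univ.filter (fun q => f q = f p)).Nonempty := ⟨p, by simp⟩
      set m := (Finset.univ.filter (fun q => f q = f p)).min' hne with hm
      have hmem : m ∈ Finset.univ.filter (fun q => f q = f p) := Finset.min'_mem _ _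
      have hfm : f m = f p := by simpa using hmem
      refine ⟨m, ?_, hfm⟩
      intro q hq hfq
      have : m ≤ q := Finset.min'_le _ _ (by simp [hfq, hfm])
      exact absurd hq (not_lt.2 this)
    · exact Set.image_subset_range f _
  have hinj : Set.InjOn f {p : Fin n | ∀ q, q < p → f q ≠ f p} := by
    intro p₁ h₁ p₂ h₂ hf
    by_contra hne
    rcases lt_or_gt_of_ne hne with hlt | hlt
    · exact h₂ p₁ hlt hf
    · exact h₁ p₂ hlt hf.symm
  rw [hrange, Set.ncard_image_of_injOn hinj, ← Nat.card_coe_set_eq]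
  rfl

lemma bondCount_eq {n : ℕ} (σ : Equiv.Perm (Fin n)) :
    bondCount σ = Nat.card {p : Fin n //
      ∃ (j : ℕ) (h : j + 1 < n), (p : ℕ) = j + 1 ∧ PermBondAt σ j h} := by
  rw [bondCount]
  apply Nat.card_congr
  refine
    { toFun := fun x => ⟨x.1.2, (x.1.1 : ℕ),
        by have h1 := x.1.2.isLt; have h2 := x.2.1; omega, x.2.1, ?_⟩
      invFun := fun y => ⟨(⟨(y.1 : ℕ) - 1, by have := y.1.isLt; omega⟩, y.1), ?_, ?_⟩
      left_inv := fun x => Subtype.ext (Prod.ext (Fin.ext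
        (show ((x.1.2 : ℕ)) - 1 = (x.1.1 : ℕ) by have := x.2.1; omega)) rfl)
      right_inv := fun y => Subtype.ext rfl }
  · unfold PermBondAt
    have e : (⟨(x.1.1 : ℕ) + 1, by have h1 := x.1.2.isLt; have h2 := x.2.1; omega⟩ : Fin n)
        = x.1.2 := Fin.ext x.2.1.symm
    rw [e]
    have e2 : ∀ hh : (x.1.1 : ℕ) < n, (⟨(x.1.1 : ℕ), hh⟩ : Fin n) = x.1.1 :=
      fun hh => Fin.ext rfl
    rw [e2]
    exact x.2.2
  · obtain ⟨j, h, hpj, hb⟩ := y.2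
    simp only []
    omega
  · obtain ⟨j, h, hpj, hb⟩ := y.2
    unfold PermBondAt at hb
    have e1 : ∀ hh : (y.1 : ℕ) - 1 < n,
        (σ (⟨(y.1 : ℕ) - 1, hh⟩ : Fin n)).val = (σ (⟨j, by omega⟩ : Fin n)).val :=
      fun hh => congrArg Fin.val (congrArg σ (Fin.ext (by simp; omega)))
    have e2 : (σ y.1).val = (σ (⟨j + 1, h⟩ : Fin n)).val :=
      congrArg Fin.val (congrArg σ (Fin.ext hpj))
    rw [e1, e2]
    exact hb

/-- the number of distinct patterns of length `n-1` contained in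
`σ` (obtained by deleting one entry and standardizing) is `n - β(σ)`, where
`β(σ)` is the number of bonds of `σ`. -/
theorem stmt5 {n : ℕ} (σ : Equiv.Perm (Fin n)) :
    Set.ncard (Set.range (delSeq σ)) = n - bondCount σ := by
  classical
  rw [ncard_range_eq_card_firstOcc (delSeq σ), bondCount_eq σ]
  have key : ∀ p : Fin n,
      (∀ q, q < p → delSeq σ q ≠ delSeq σ p) ↔
      ¬ (∃ (j : ℕ) (h : j + 1 < n), (p : ℕ) = j + 1 ∧ PermBondAt σ j h) := by
    intro p
    constructor
    · rintro hp ⟨j, h, hpj, hb⟩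
      have hA := lemA σ j h hb
      have hlt : (⟨j, by omega⟩ : Fin n) < p := by rw [Fin.lt_def]; simp; omega
      have hpe : (⟨j + 1, h⟩ : Fin n) = p := Fin.ext hpj.symm
      rw [hpe] at hA
      exact hp _ hlt hA
    · intro hnb q hq he
      exact hnb (lemB σ p q hq he)
  rw [Nat.card_congr (Equiv.subtypeEquivRight key)]
  rw [Nat.card_eq_fintype_card, Nat.card_eq_fintype_card, Fintype.card_subtype_compl]
  simp
end

section
/- If σ ∈ S_n is a permutation in which every digit is a separator, then σ has no bonds, i.e., σ ∈ K_n. -/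
/-!
Regard `σ` as the finite point set `{(i, σ i)} ⊆ ℤ²`. A horizontal separator is a vertical
separator of the transposed set, so the hypothesis is invariant under the symmetries of the
square lattice. Up to these symmetries a bond `(x, y), (x + 1, y + 1)` forces the point
`(x + 2, y - 1)`, and these three points force a zigzag
`(c, t), (c + 1, b), (c + 2, t + 1), (c + 3, b - 1)` with `b < t`. The last point of a zigzag
cannot be a horizontal separator, and as a vertical separator it forces `(c + 4, t + 2)`; the
mirror image of the last four points is again a zigzag, so the zigzag never ends.
-/

open Function

theorem Set.Infinite.of_preimage {α β : Type*} {f : α → β} (hf : Injective f) {s : Set β}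
    (h : (f ⁻¹' s).Infinite) : s.Infinite :=
  fun hs => h (hs.preimage hf.injOn)

/-- The graph of a partial injection `ℤ → ℤ` all of whose points are separators. -/
structure AllSeparators (S : Set (ℤ × ℤ)) : Prop where
  snd_eq_of_fst_eq : ∀ {x y x' y' : ℤ}, (x, y) ∈ S → (x', y') ∈ S → x = x' → y = y'
  fst_eq_of_snd_eq : ∀ {x y x' y' : ℤ}, (x, y) ∈ S → (x', y') ∈ S → y = y' → x = x'
  isSeparator : ∀ {x y : ℤ}, (x, y) ∈ S →
    (∃ y₁ y₂, (x - 1, y₁) ∈ S ∧ (x + 1, y₂) ∈ S ∧ (y₁ - y₂).natAbs = 1) ∨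
      ∃ x₁ x₂, (x₁, y - 1) ∈ S ∧ (x₂, y + 1) ∈ S ∧ (x₁ - x₂).natAbs = 1

def Zigzag (S : Set (ℤ × ℤ)) (c t b : ℤ) : Prop :=
  (c, t) ∈ S ∧ (c + 1, b) ∈ S ∧ (c + 2, t + 1) ∈ S ∧ (c + 3, b - 1) ∈ S

namespace AllSeparators

variable {S : Set (ℤ × ℤ)}

theorem preimage_swap (hS : AllSeparators S) : AllSeparators (Prod.swap ⁻¹' S) where
  snd_eq_of_fst_eq h h' hx := hS.fst_eq_of_snd_eq h h' hx
  fst_eq_of_snd_eq h h' hy := hS.snd_eq_of_fst_eq h h' hy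
  isSeparator h := (hS.isSeparator h).symm

theorem preimage_neg_snd (hS : AllSeparators S) :
    AllSeparators (Prod.map id Neg.neg ⁻¹' S) where
  snd_eq_of_fst_eq h h' hx := neg_injective (hS.snd_eq_of_fst_eq h h' hx)
  fst_eq_of_snd_eq h h' hy := hS.fst_eq_of_snd_eq h h' (by rw [hy])
  isSeparator {x y} h := by
    have hxy : (x, -y) ∈ S := h
    rcases hS.isSeparator hxy with ⟨y₁, y₂, h₁, h₂, hy⟩ | ⟨x₁, x₂, h₁, h₂, hx⟩
    · refine .inl ⟨-y₁, -y₂, ?_, ?_, by omega⟩ <;> simpa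
    · refine .inr ⟨x₂, x₁, ?_, ?_, by omega⟩
      · show (x₂, -(y - 1)) ∈ S
        convert h₂ using 2; ring
      · show (x₁, -(y + 1)) ∈ S
        convert h₁ using 2; ring

variable (hS : AllSeparators S)
include hS

theorem zigzag_extend {c t b : ℤ} (hbt : b < t) (hz : Zigzag S c t b) : (c + 4, t + 2) ∈ S := by
  obtain ⟨hA, hB, hC, hD⟩ := hz
  rcases hS.isSeparator hD with ⟨y₁, y₂, h₁, h₂, hy⟩ | ⟨x₁, x₂, h₁, h₂, hx⟩
  · have hy₁ : y₁ = t + 1 := hS.snd_eq_of_fst_eq h₁ hC (by ring)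
    rcases (by omega : y₂ = t ∨ y₂ = t + 2) with rfl | rfl
    · have := hS.fst_eq_of_snd_eq h₂ hA rfl
      omega
    · convert h₂ using 2
      ring
  · have hx₂ : x₂ = c + 1 := hS.fst_eq_of_snd_eq h₂ hB (by ring)
    rcases (by omega : x₁ = c ∨ x₁ = c + 2) with rfl | rfl
    · have := hS.snd_eq_of_fst_eq h₁ hA rfl
      omega
    · have := hS.snd_eq_of_fst_eq h₁ hC rfl
      omega

theorem zigzag_succ {c t b : ℤ} (hbt : b < t) (hz : Zigzag S c t b) :
    Zigzag S (c + 2) (t + 1) (b - 1) := by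
  obtain ⟨hA, hB, hC, hD⟩ := hz
  have hE : (c + 4, t + 2) ∈ S := hS.zigzag_extend hbt ⟨hA, hB, hC, hD⟩
  -- the mirror image of the last four points is again a zigzag
  have hF : (c + 1 + 4, -b + 2) ∈ Prod.map id Neg.neg ⁻¹' S := by
    refine hS.preimage_neg_snd.zigzag_extend (t := -b) (b := -t - 1) (by omega) ?_
    simp only [Zigzag, Set.mem_preimage, Prod.map_apply, id_eq]
    refine ⟨?_, ?_, ?_, ?_⟩
    · simpa using hB
    · convert hC using 2 <;> ring
    · convert hD using 2 <;> ring
    · convert hE using 2 <;> ring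
  simp only [Set.mem_preimage, Prod.map_apply, id_eq] at hF
  refine ⟨hC, ?_, ?_, ?_⟩
  · convert hD using 2; ring
  · convert hE using 2 <;> ring
  · convert hF using 2 <;> ring

theorem infinite_of_zigzag {c t b : ℤ} (hbt : b < t) (hz : Zigzag S c t b) : S.Infinite := by
  have hzk : ∀ k : ℕ, Zigzag S (c + 2 * k) (t + k) (b - k) := by
    intro k
    induction k with
    | zero => simpa using hz
    | succ k ih =>
      convert hS.zigzag_succ (by omega) ih using 1 <;> push_cast <;> ring
  refine Set.infinite_of_injective_forall_mem (f := fun k : ℕ ↦ (c + 2 * k, t + k)) ?_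
    fun k ↦ (hzk k).1
  intro k l hkl
  simp only [Prod.mk.injEq] at hkl
  omega

theorem infinite_of_zigzag_start {x y : ℤ} (hA : (x, y) ∈ S) (hB : (x + 1, y + 1) ∈ S)
    (hC : (x + 2, y - 1) ∈ S) : S.Infinite := by
  rcases hS.isSeparator hC with ⟨y₁, y₂, h₁, h₂, hy⟩ | ⟨x₁, x₂, h₁, h₂, hx⟩
  · have hy₁ : y₁ = y + 1 := hS.snd_eq_of_fst_eq h₁ hB (by ring)
    rcases (by omega : y₂ = y ∨ y₂ = y + 2) with rfl | rfl
    · have := hS.fst_eq_of_snd_eq h₂ hA rfl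
      omega
    · refine .of_preimage (injective_id.prodMap neg_injective)
        (hS.preimage_neg_snd.infinite_of_zigzag (c := x) (t := -y) (b := -y - 1) (by omega) ?_)
      simp only [Zigzag, Set.mem_preimage, Prod.map_apply, id_eq]
      refine ⟨?_, ?_, ?_, ?_⟩
      · simpa using hA
      · convert hB using 2; ring
      · convert hC using 2; ring
      · convert h₂ using 2 <;> ring
  · have hx₂ : x₂ = x := hS.fst_eq_of_snd_eq h₂ hA (by ring)
    rcases (by omega : x₁ = x - 1 ∨ x₁ = x + 1) with rfl | rfl
    · -- a quarter turn maps these four points to a zigzag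
      refine .of_preimage (injective_id.prodMap neg_injective) <|
        .of_preimage Prod.swap_injective <|
        hS.preimage_neg_snd.preimage_swap.infinite_of_zigzag (c := -y - 1) (t := x + 1) (b := x)
          (by omega) ?_
      simp only [Zigzag, Set.mem_preimage, Prod.map_apply, id_eq, Prod.swap_prod_mk]
      refine ⟨?_, ?_, ?_, ?_⟩
      · convert hB using 2; ring
      · convert hA using 2; ring
      · convert hC using 2 <;> ring
      · convert h₁ using 2; ring
    · have := hS.snd_eq_of_fst_eq h₁ hB rfl
      omega

theorem infinite_of_bond {x y : ℤ} (hA : (x, y) ∈ S) (hB : (x + 1, y + 1) ∈ S) : S.Infinite := by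
  rcases hS.isSeparator hB with ⟨y₁, y₂, h₁, h₂, hy⟩ | ⟨x₁, x₂, h₁, h₂, hx⟩
  · have hy₁ : y₁ = y := hS.snd_eq_of_fst_eq h₁ hA (by ring)
    rcases (by omega : y₂ = y - 1 ∨ y₂ = y + 1) with rfl | rfl
    · exact hS.infinite_of_zigzag_start hA hB (by convert h₂ using 2; ring)
    · have := hS.fst_eq_of_snd_eq h₂ hB rfl
      omega
  · have hx₁ : x₁ = x := hS.fst_eq_of_snd_eq h₁ hA (by ring)
    rcases (by omega : x₂ = x - 1 ∨ x₂ = x + 1) with rfl | rfl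
    · exact .of_preimage Prod.swap_injective <|
        hS.preimage_swap.infinite_of_zigzag_start (x := y) (y := x) hA hB
          (show (x - 1, y + 2) ∈ S by convert h₂ using 2; ring)
    · have := hS.snd_eq_of_fst_eq h₂ hB rfl
      omega

theorem natAbs_sub_ne_one_of_finite (hfin : S.Finite) {x y y' : ℤ} (h : (x, y) ∈ S)
    (h' : (x + 1, y') ∈ S) : (y - y').natAbs ≠ 1 := by
  intro hbond
  rcases (by omega : y' = y + 1 ∨ y' = y - 1) with rfl | rfl
  · exact hS.infinite_of_bond h h' hfin
  · refine hS.preimage_neg_snd.infinite_of_bond (x := x) (y := -y) (by simpa using h) ?_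
      (hfin.preimage (injective_id.prodMap neg_injective).injOn)
    simp only [Set.mem_preimage, Prod.map_apply, id_eq]
    convert h' using 2; ring

end AllSeparators

section PermGraph

variable {n : ℕ} (σ : Equiv.Perm (Fin n))

def permGraph : Set (ℤ × ℤ) :=
  Set.range fun i : Fin n ↦ (((i : ℕ) : ℤ), ((σ i : ℕ) : ℤ))

theorem finite_permGraph : (permGraph σ).Finite :=
  Set.finite_range _

variable {σ}

theorem mk_mem_permGraph {x y : ℤ} {i : ℕ} (hi : i < n) (hx : x = i)
    (hy : y = (σ ⟨i, hi⟩ : ℕ)) : (x, y) ∈ permGraph σ :=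
  ⟨⟨i, hi⟩, by rw [hx, hy]⟩

theorem allSeparators_permGraph (hsep : ∀ b : Fin n, IsVSepVal σ b ∨ IsHSepVal σ b) :
    AllSeparators (permGraph σ) where
  snd_eq_of_fst_eq := by
    rintro _ _ _ _ ⟨i, hi⟩ ⟨i', hi'⟩ h
    simp only [Prod.mk.injEq] at hi hi'
    obtain ⟨rfl, rfl⟩ := hi
    obtain ⟨rfl, rfl⟩ := hi'
    rw [Fin.ext (by exact_mod_cast h : (i : ℕ) = i')]
  fst_eq_of_snd_eq := by
    rintro _ _ _ _ ⟨i, hi⟩ ⟨i', hi'⟩ h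
    simp only [Prod.mk.injEq] at hi hi'
    obtain ⟨rfl, rfl⟩ := hi
    obtain ⟨rfl, rfl⟩ := hi'
    rw [σ.injective (Fin.ext (by exact_mod_cast h : (σ i : ℕ) = σ i'))]
  isSeparator := by
    rintro _ _ ⟨i, hi⟩
    simp only [Prod.mk.injEq] at hi
    obtain ⟨rfl, rfl⟩ := hi
    rcases hsep (σ i) with ⟨j, hj, hij, hy⟩ | ⟨j, hj, hx, hsum⟩
    · rw [Equiv.Perm.inv_def, Equiv.symm_apply_apply] at hij
      exact .inl ⟨_, _, mk_mem_permGraph _ (by omega) rfl, mk_mem_permGraph hj (by omega) rfl, hy⟩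
    · have hj' : j < n := by omega
      rcases (by omega : ((σ ⟨j, hj'⟩ : ℕ) : ℤ) = (σ i : ℕ) - 1 ∧
          ((σ ⟨j + 1, hj⟩ : ℕ) : ℤ) = (σ i : ℕ) + 1 ∨
        ((σ ⟨j, hj'⟩ : ℕ) : ℤ) = (σ i : ℕ) + 1 ∧
          ((σ ⟨j + 1, hj⟩ : ℕ) : ℤ) = (σ i : ℕ) - 1) with ⟨h₁, h₂⟩ | ⟨h₁, h₂⟩
      · exact .inr ⟨j, j + 1, mk_mem_permGraph hj' rfl h₁.symm,
          mk_mem_permGraph hj (by push_cast; rfl) h₂.symm, by omega⟩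
      · exact .inr ⟨j + 1, j, mk_mem_permGraph hj (by push_cast; rfl) h₂.symm,
          mk_mem_permGraph hj' rfl h₁.symm, by omega⟩

end PermGraph

/-- if every digit of `σ` is a separator then `σ` has no bonds,
i.e. `σ` is a king permutation. -/
theorem stmt6 {n : ℕ} (σ : Equiv.Perm (Fin n))
    (hsep : ∀ b : Fin n, IsVSepVal σ b ∨ IsHSepVal σ b) :
    ∀ (j : ℕ) (h : j + 1 < n), ¬ PermBondAt σ j h :=
  fun j h ↦ (allSeparators_permGraph hsep).natAbs_sub_ne_one_of_finite (finite_permGraph σ)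
    (mk_mem_permGraph (by omega) rfl rfl) (mk_mem_permGraph h (by push_cast; rfl) rfl)
end

section
/- Every entry of a permutation σ ∈ S_n is a separator if and only if n = 4k for some k ≥ 1 and σ is an inflation π[α_1, …, α_k] where π ∈ S_k and each α_i ∈ {[3142], [2413]}. -/
/-!
Extend the word of `σ` to `ℤ` and read its values upwards in groups of four. Suppose that for
every `m' < m` with `4 ∣ m'` the values `m', …, m' + 3` already fill four consecutive positions
in the pattern `3142` or `2413`. Then both position-neighbours of `m - 1` lie below `m`, so `m` is
not a horizontal separator: the neighbours of `m` are consecutive values `d, d + 1`, and both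
exceed `m`. If `d = m + 1` the separator condition propagates an endless zigzag
`…, m+3, m+1, m, m+2, m+4, …`; if `d ≥ m + 3` one of `d - 1, d, d + 1` is not a separator; so
`d = m + 2`, and this forces the block `m+2 m m+3 m+1` or its mirror image. Hence `n = 4k`, and
since the blocks tile the positions they start at multiples of `4`. Conversely, every entry of
such a block is a separator.
-/

namespace Separators

def IsSeparator (W : ℤ → ℤ) (b : ℤ) : Prop :=
  (∃ p, W (p + 1) = b ∧ (W p - W (p + 2)).natAbs = 1) ∨
    ∃ p, (W p - W (p + 1)).natAbs = 2 ∧ W p + W (p + 1) = 2 * b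

/-- Positions outside `[0, N)` carry the sentinel `-5`, too far below the genuine values
`0, …, N - 1` to take part in a separator witness, so the ends of the word need no special
treatment. -/
structure IsSeparatorWord (N : ℤ) (W : ℤ → ℤ) : Prop where
  nonneg : 0 ≤ N
  lt : ∀ u, W u < N
  nonneg_iff : ∀ u, 0 ≤ W u ↔ 0 ≤ u ∧ u < N
  eq_of_neg : ∀ u, W u < 0 → W u = -5
  inj : ∀ u v, W u = W v → 0 ≤ W u → u = v
  surj : ∀ b, 0 ≤ b → b < N → ∃ u, W u = b
  sep : ∀ b, 0 ≤ b → b < N → IsSeparator W b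

/-- The patterns `3142` and `2413` on the values `m, …, m + 3` at positions `t, …, t + 3`. -/
def IsBlock (W : ℤ → ℤ) (m t : ℤ) : Prop :=
  (W t = m + 2 ∧ W (t + 1) = m ∧ W (t + 2) = m + 3 ∧ W (t + 3) = m + 1) ∨
    (W t = m + 1 ∧ W (t + 1) = m + 3 ∧ W (t + 2) = m ∧ W (t + 3) = m + 2)

def BlocksBelow (W : ℤ → ℤ) (m : ℤ) : Prop :=
  ∀ p, 0 ≤ p → 4 * p < m → ∃ t, IsBlock W (4 * p) t

def Zigzag (W : ℤ → ℤ) (m c i : ℤ) : Prop :=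
  W (c + i) = m + 2 * i ∧ W (c - i) = m + 2 * i - 1

def reflect (N : ℤ) (W : ℤ → ℤ) (u : ℤ) : ℤ := W (N - 1 - u)

@[simp]
lemma reflect_reflect (N : ℤ) (W : ℤ → ℤ) : reflect N (reflect N W) = W := by
  funext u
  simp [reflect]

lemma IsBlock.isSeparator {W : ℤ → ℤ} {m t b : ℤ} (ht : IsBlock W m t) (hb : m ≤ b)
    (hb' : b ≤ m + 3) : IsSeparator W b := by
  obtain rfl | rfl | rfl | rfl : b = m ∨ b = m + 1 ∨ b = m + 2 ∨ b = m + 3 := by omega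
  all_goals rcases ht with ⟨h0, h1, h2, h3⟩ | ⟨h0, h1, h2, h3⟩
  exacts [Or.inl ⟨t, by grind⟩, Or.inl ⟨t + 1, by grind⟩, Or.inr ⟨t, by grind⟩,
    Or.inr ⟨t + 2, by grind⟩, Or.inr ⟨t + 2, by grind⟩, Or.inr ⟨t, by grind⟩,
    Or.inl ⟨t + 1, by grind⟩, Or.inl ⟨t, by grind⟩]

lemma BlocksBelow.isSeparator {W : ℤ → ℤ} {N b : ℤ} (hB : BlocksBelow W N)
    (hb : 0 ≤ b) (hbN : b < N) : IsSeparator W b := by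
  obtain ⟨t, ht⟩ := hB (b / 4) (by omega) (by omega)
  exact ht.isSeparator (by omega) (by omega)

lemma isBlock_iff_pattern {W : ℤ → ℤ} {m t : ℤ} : IsBlock W m t ↔ ∃ a : Fin 4 → Fin 4,
    (a = ![2, 0, 3, 1] ∨ a = ![1, 3, 0, 2]) ∧ ∀ r : Fin 4, W (t + r) = m + a r := by
  constructor
  · rintro (⟨h0, h1, h2, h3⟩ | ⟨h0, h1, h2, h3⟩)
    · exact ⟨_, Or.inl rfl, fun r => by fin_cases r <;> simp [*]⟩
    · exact ⟨_, Or.inr rfl, fun r => by fin_cases r <;> simp [*]⟩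
  · rintro ⟨a, rfl | rfl, ha⟩
    · have := ha 0; have := ha 1; have := ha 2; have := ha 3
      left; simp_all
    · have := ha 0; have := ha 1; have := ha 2; have := ha 3
      right; simp_all

lemma IsBlock.reflect {W : ℤ → ℤ} {m t : ℤ} (N : ℤ) (ht : IsBlock W m t) :
    IsBlock (reflect N W) m (N - 4 - t) := by
  rcases ht with ht | ht
  · exact Or.inr (by grind [Separators.reflect])
  · exact Or.inl (by grind [Separators.reflect])

lemma BlocksBelow.reflect {W : ℤ → ℤ} {m : ℤ} (N : ℤ) (hB : BlocksBelow W m) :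
    BlocksBelow (reflect N W) m := by
  intro p hp hpm
  obtain ⟨t, ht⟩ := hB p hp hpm
  exact ⟨_, ht.reflect N⟩

lemma BlocksBelow.add_four {W : ℤ → ℤ} {m t : ℤ} (hB : BlocksBelow W m) (hm : m % 4 = 0)
    (ht : IsBlock W m t) : BlocksBelow W (m + 4) := by
  intro p hp hpm
  rcases lt_or_eq_of_le (show 4 * p ≤ m by omega) with hlt | heq
  · exact hB p hp hlt
  · exact ⟨t, heq ▸ ht⟩

namespace IsSeparatorWord

variable {N : ℤ} {W : ℤ → ℤ}

protected lemma reflect (h : IsSeparatorWord N W) : IsSeparatorWord N (reflect N W) where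
  nonneg := h.nonneg
  lt u := h.lt _
  nonneg_iff u := by have := h.nonneg_iff (N - 1 - u); simp only [Separators.reflect]; omega
  eq_of_neg u := h.eq_of_neg _
  inj u v huv hu := by have := h.inj _ _ huv hu; omega
  surj b hb hbN := by
    obtain ⟨u, hu⟩ := h.surj b hb hbN
    exact ⟨N - 1 - u, by simp [Separators.reflect, hu]⟩
  sep b hb hbN := by
    rcases h.sep b hb hbN with ⟨p, hp, hV⟩ | ⟨p, hd, hs⟩
    · exact Or.inl ⟨N - 3 - p, by grind [Separators.reflect]⟩
    · exact Or.inr ⟨N - 2 - p, by grind [Separators.reflect]⟩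

lemma vsep_or_adjacent (h : IsSeparatorWord N W) {v a q r : ℤ} (hv : 0 ≤ v) (hq : W q = v)
    (hr : W r = a) (ha : (a - v).natAbs = 1) :
    (W (q - 1) - W (q + 1)).natAbs = 1 ∨ W (r - 1) = 2 * v - a ∨ W (r + 1) = 2 * v - a := by
  have := h.inj
  have := h.eq_of_neg
  rcases h.sep v hv (hq ▸ h.lt q) with ⟨p, hp, hV⟩ | ⟨p, hd, hs⟩
  · grind
  · have := h.eq_of_neg p
    have := h.eq_of_neg (p + 1)
    obtain hpa | hpa : W p = a ∨ W (p + 1) = a := by omega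
    · grind
    · grind

lemma isBlock_bounds (h : IsSeparatorWord N W) {m t : ℤ} (ht : IsBlock W m t) :
    0 ≤ m ∧ m + 3 < N := by
  have := h.eq_of_neg (t + 1)
  have := h.eq_of_neg (t + 2)
  have := h.eq_of_neg (t + 3)
  have := h.lt (t + 1)
  have := h.lt (t + 2)
  rcases ht with ht | ht <;> omega

lemma eq_of_isBlock (h : IsSeparatorWord N W) {m t t' : ℤ} (ht : IsBlock W m t)
    (ht' : IsBlock W m t') : t = t' := by
  have := h.inj
  have := (h.isBlock_bounds ht).1
  rcases ht with ⟨h0, h1, h2, h3⟩ | ⟨h0, h1, h2, h3⟩ <;>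
    rcases ht' with ⟨g0, g1, g2, g3⟩ | ⟨g0, g1, g2, g3⟩ <;> grind

lemma vsep_of_blocksBelow (h : IsSeparatorWord N W) {m c : ℤ} (hB : BlocksBelow W m)
    (hm : m % 4 = 0) (hm0 : 0 ≤ m) (hc : W c = m) : (W (c - 1) - W (c + 1)).natAbs = 1 := by
  have := h.inj
  have := h.eq_of_neg
  rcases h.sep m hm0 (hc ▸ h.lt c) with ⟨p, hp, hV⟩ | ⟨p, hd, hs⟩
  · grind
  · -- `m - 1` would sit next to `m + 1`, but its neighbours lie in its block below `m`
    obtain ⟨t, ht⟩ := hB (m / 4 - 1) (by grind) (by omega)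
    have := h.eq_of_neg p
    have := h.eq_of_neg (p + 1)
    rcases ht with ⟨h0, h1, h2, h3⟩ | ⟨h0, h1, h2, h3⟩ <;> grind

lemma le_neighbours_of_vsep (h : IsSeparatorWord N W) {m b p : ℤ} (hB : BlocksBelow W m)
    (hm : m % 4 = 0) (hb : m ≤ b) (hp : W p = b) (hV : (W (p - 1) - W (p + 1)).natAbs = 1) :
    m ≤ W (p - 1) ∧ m ≤ W (p + 1) := by
  have := h.inj
  have := h.eq_of_neg
  by_contra! hlt
  obtain ⟨x, hx, hxm, hx0⟩ : ∃ x, (x = W (p - 1) ∨ x = W (p + 1)) ∧ x < m ∧ 0 ≤ x := by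
    grind
  -- the block of `x` would contain the other neighbour `x ± 1` too, hence also `p`
  obtain ⟨t, ht⟩ := hB (x / 4) (by omega) (by omega)
  have : x % 4 = 0 ∨ x % 4 = 1 ∨ x % 4 = 2 ∨ x % 4 = 3 := by omega
  rcases ht with ⟨h0, h1, h2, h3⟩ | ⟨h0, h1, h2, h3⟩ <;> grind

lemma block_of_neighbours (h : IsSeparatorWord N W) {m c : ℤ} (hB : BlocksBelow W m)
    (hm : m % 4 = 0) (hm0 : 0 ≤ m) (hc : W c = m) (hl : W (c - 1) = m + 2)
    (hr : W (c + 1) = m + 3) : W (c + 2) = m + 1 := by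
  have := h.inj
  rcases h.vsep_or_adjacent (q := c + 1) (r := c - 1) (by omega) hr hl (by omega) with hV | hL | hR
  · have := h.le_neighbours_of_vsep hB hm (by omega : m ≤ m + 3) hr hV
    grind
  · rcases h.vsep_or_adjacent (q := c - 1) (r := c + 1) (by omega) hl hr (by omega) with
      hV | hL' | hR' <;> grind
  · grind

lemma not_wide_neighbours (h : IsSeparatorWord N W) {m c d : ℤ} (hB : BlocksBelow W m)
    (hm : m % 4 = 0) (hm0 : 0 ≤ m) (hc : W c = m) (hl : W (c - 1) = d) (hr : W (c + 1) = d + 1)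
    (hd : m + 3 ≤ d) : False := by
  have := h.inj
  have hdl := h.vsep_or_adjacent (q := c - 1) (r := c + 1) (by omega) hl hr (by omega)
  have hdr := h.vsep_or_adjacent (q := c + 1) (r := c - 1) (by omega) hr hl (by omega)
  have hVl := fun hV => h.le_neighbours_of_vsep hB hm (by omega) hl hV
  have hVr := fun hV => h.le_neighbours_of_vsep hB hm (by omega) hr hV
  rcases hdl with hV | hL | hR
  · have := hVl hV
    rcases hdr with hV' | hL' | hR'
    · have := hVr hV'
      grind
    · grind
    · grind
  · grind
  · have hR : W (c + 2) = d - 1 := by grind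
    have := h.vsep_or_adjacent (q := c + 2) (r := c - 1) (by omega) hR hl (by omega)
    grind

lemma zigzag_step (h : IsSeparatorWord N W) {m c i : ℤ} (hm0 : 0 ≤ m) (hi : 1 ≤ i)
    (hz : Zigzag W m c i) (hz' : Zigzag W m c (i + 1)) : Zigzag W m c (i + 1 + 1) := by
  obtain ⟨h1, h2⟩ := hz
  obtain ⟨h3, h4⟩ := hz'
  have := h.inj
  have hl : W (c - (i + 1 + 1)) = m + 2 * (i + 1 + 1) - 1 := by
    have := h.vsep_or_adjacent (q := c + (i + 1)) (r := c - (i + 1)) (by omega) h3 h4 (by omega)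
    grind
  refine ⟨?_, hl⟩
  rcases h.vsep_or_adjacent (q := c - (i + 1 + 1)) (r := c + (i + 1)) (by omega) hl h3
    (by omega) with hV | hL | hR <;> grind (splits := 20)

lemma not_zigzag (h : IsSeparatorWord N W) {m c : ℤ} (hB : BlocksBelow W m) (hm : m % 4 = 0)
    (hm0 : 0 ≤ m) (hc : W c = m) (hl : W (c - 1) = m + 1) (hr : W (c + 1) = m + 2) : False := by
  have := h.inj
  have hz1 : Zigzag W m c 1 := ⟨by omega, by omega⟩
  have hl2 : W (c - 2) = m + 3 := by
    rcases h.vsep_or_adjacent (q := c + 1) (r := c - 1) (by omega) hr hl (by omega) with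
      hV | hL | hR
    · have := h.le_neighbours_of_vsep hB hm (by omega) hr hV
      grind
    · grind
    · grind
  have hz2 : Zigzag W m c (1 + 1) := by
    rcases h.vsep_or_adjacent (q := c - 2) (r := c + 1) (by omega) hl2 hr (by omega) with
      hV | hL | hR <;> grind [Zigzag]
  have key : ∀ n : ℕ, Zigzag W m c (n + 1) ∧ Zigzag W m c (n + 1 + 1) := by
    intro n
    induction n with
    | zero =>
      simp only [Nat.cast_zero, zero_add]
      exact ⟨hz1, hz2⟩
    | succ n ih =>
      push_cast
      exact ⟨ih.2, h.zigzag_step hm0 (by omega) ih.1 ih.2⟩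
  have hzN := (key N.toNat).1.1
  have := h.lt (c + (N.toNat + 1))
  have := h.nonneg
  omega

lemma exists_block_of_lt (h : IsSeparatorWord N W) {m c : ℤ} (hB : BlocksBelow W m)
    (hm : m % 4 = 0) (hm0 : 0 ≤ m) (hc : W c = m) (hlt : W (c - 1) < W (c + 1)) :
    ∃ t, IsBlock W m t := by
  have hV := h.vsep_of_blocksBelow hB hm hm0 hc
  have hS := h.le_neighbours_of_vsep hB hm le_rfl hc hV
  have hne : W (c - 1) ≠ m := fun he => by
    have := h.inj _ _ (he.trans hc.symm) (by omega)
    omega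
  obtain hd | hd | hd : W (c - 1) = m + 1 ∨ W (c - 1) = m + 2 ∨ m + 3 ≤ W (c - 1) := by omega
  · exact (h.not_zigzag hB hm hm0 hc hd (by omega)).elim
  · have := h.block_of_neighbours hB hm hm0 hc hd (by omega)
    exact ⟨c - 1, Or.inl (by grind)⟩
  · exact (h.not_wide_neighbours hB hm hm0 hc rfl (by omega) hd).elim

lemma exists_block (h : IsSeparatorWord N W) {m : ℤ} (hB : BlocksBelow W m) (hm : m % 4 = 0)
    (hm0 : 0 ≤ m) (hmN : m < N) : ∃ t, IsBlock W m t := by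
  obtain ⟨c, hc⟩ := h.surj m hm0 hmN
  have hV := h.vsep_of_blocksBelow hB hm hm0 hc
  rcases lt_or_gt_of_ne (show W (c - 1) ≠ W (c + 1) by omega) with hlt | hgt
  · exact h.exists_block_of_lt hB hm hm0 hc hlt
  · obtain ⟨t, ht⟩ := h.reflect.exists_block_of_lt (hB.reflect N) hm hm0 (c := N - 1 - c)
      (by simp [Separators.reflect, hc]) (by simp only [Separators.reflect]; grind)
    exact ⟨N - 4 - t, by simpa using ht.reflect N⟩

lemma blocksBelow_four_mul (h : IsSeparatorWord N W) :
    ∀ k : ℕ, 4 * (k : ℤ) ≤ N → BlocksBelow W (4 * k)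
  | 0, _ => fun p hp hpm => by omega
  | k + 1, hk => by
    have hB := h.blocksBelow_four_mul k (by omega)
    obtain ⟨t, ht⟩ := h.exists_block hB (by omega) (by omega) (by omega)
    simpa [mul_add] using hB.add_four (by omega) ht

lemma exists_eq_four_mul_blocksBelow (h : IsSeparatorWord N W) :
    ∃ k : ℕ, N = 4 * k ∧ BlocksBelow W N := by
  have := h.nonneg
  have hB := h.blocksBelow_four_mul (N / 4).toNat (by omega)
  obtain hN | hN : N = 4 * (N / 4).toNat ∨ 4 * (N / 4).toNat < N := by omega
  · exact ⟨_, hN, hN ▸ hB⟩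
  · obtain ⟨t, ht⟩ := h.exists_block hB (by omega) (by omega) hN
    have := (h.isBlock_bounds ht).2
    omega

lemma exists_block_covering (h : IsSeparatorWord N W) (hB : BlocksBelow W N) {u : ℤ}
    (hu : 0 ≤ u) (huN : u < N) :
    ∃ t, IsBlock W (4 * (W u / 4)) t ∧ t ≤ u ∧ u ≤ t + 3 := by
  have hx := (h.nonneg_iff u).2 ⟨hu, huN⟩
  obtain ⟨t, ht⟩ := hB (W u / 4) (by omega) (by have := h.lt u; omega)
  refine ⟨t, ht, ?_⟩
  have := h.inj
  have : W u % 4 = 0 ∨ W u % 4 = 1 ∨ W u % 4 = 2 ∨ W u % 4 = 3 := by omega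
  rcases ht with ⟨h0, h1, h2, h3⟩ | ⟨h0, h1, h2, h3⟩ <;> grind

lemma exists_block_at_four_mul (h : IsSeparatorWord N W) (hB : BlocksBelow W N) :
    ∀ j : ℕ, 4 * (j : ℤ) < N → ∃ p, IsBlock W (4 * p) (4 * j)
  | 0, hN => by
    obtain ⟨t, ht, ht0, -⟩ := h.exists_block_covering hB le_rfl (by simpa using hN)
    have := (h.nonneg_iff 0).2 ⟨le_rfl, by simpa using hN⟩
    have : 0 ≤ t := ((h.nonneg_iff t).1 (by rcases ht with ht | ht <;> omega)).1
    exact ⟨_, by simpa [show t = 0 by omega] using ht⟩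
  | j + 1, hN => by
    obtain ⟨p, hp⟩ := h.exists_block_at_four_mul hB j (by omega)
    obtain ⟨t, ht, htu, hut⟩ :=
      h.exists_block_covering hB (u := 4 * (j + 1)) (by omega) (by omega)
    have htj : t = 4 * (j + 1) := by
      -- otherwise the block covering `4 (j + 1)` would overlap the block at `4 j`
      by_contra hne
      have := h.inj
      have := (h.nonneg_iff (4 * j)).2 ⟨by omega, by omega⟩
      have := (h.nonneg_iff (4 * (j + 1))).2 ⟨by omega, by omega⟩
      rcases hp with ⟨h0, h1, h2, h3⟩ | ⟨h0, h1, h2, h3⟩ <;>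
        rcases ht with ⟨g0, g1, g2, g3⟩ | ⟨g0, g1, g2, g3⟩ <;> grind
    push_cast
    exact ⟨_, htj ▸ ht⟩

lemma exists_aligned_blocks (h : IsSeparatorWord N W) (hB : BlocksBelow W N) {k : ℕ}
    (hN : N = 4 * k) :
    ∀ q : Fin k, ∃ p : Fin k, IsBlock W (4 * (p : ℕ)) (4 * (q : ℕ)) := by
  intro q
  obtain ⟨p, hp⟩ := h.exists_block_at_four_mul hB q (by omega)
  have := h.isBlock_bounds hp
  refine ⟨⟨p.toNat, by omega⟩, ?_⟩
  rwa [Fin.val_mk, Int.toNat_of_nonneg (by omega)]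

end IsSeparatorWord

noncomputable def wordOf {n : ℕ} (σ : Equiv.Perm (Fin n)) (u : ℤ) : ℤ :=
  if h : 0 ≤ u ∧ u < n then (σ ⟨u.toNat, by omega⟩ : ℕ) else -5

section wordOf

variable {n : ℕ} (σ : Equiv.Perm (Fin n))

lemma wordOf_natCast (u : ℕ) (hu : u < n) : wordOf σ u = σ ⟨u, hu⟩ := by
  simp [wordOf, hu]

lemma wordOf_natCast_add_one (j : ℕ) (h : j + 1 < n) :
    wordOf σ (j + 1) = σ ⟨j + 1, h⟩ := by
  exact_mod_cast wordOf_natCast σ (j + 1) h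

lemma wordOf_natCast_add_two (j : ℕ) (h : j + 2 < n) :
    wordOf σ (j + 2) = σ ⟨j + 2, h⟩ := by
  exact_mod_cast wordOf_natCast σ (j + 2) h

lemma wordOf_nonneg_iff (u : ℤ) : 0 ≤ wordOf σ u ↔ 0 ≤ u ∧ u < n := by
  unfold wordOf
  split_ifs with hu <;> simp [hu]

lemma wordOf_eq_of_neg (u : ℤ) (hu : wordOf σ u < 0) : wordOf σ u = -5 := by
  unfold wordOf at *
  split_ifs at * <;> omega

lemma wordOf_lt (u : ℤ) : wordOf σ u < n := by
  unfold wordOf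
  split_ifs
  · exact_mod_cast Fin.is_lt _
  · omega

lemma exists_natCast_of_wordOf_nonneg {u : ℤ} (hu : 0 ≤ wordOf σ u) :
    ∃ j : ℕ, ∃ hj : j < n, u = j ∧ wordOf σ u = σ ⟨j, hj⟩ := by
  obtain ⟨hu0, hun⟩ := (wordOf_nonneg_iff σ u).1 hu
  lift u to ℕ using hu0
  exact ⟨u, by omega, rfl, wordOf_natCast σ u (by omega)⟩

lemma isVSepVal_iff (b : Fin n) : IsVSepVal σ b ↔
    ∃ p, wordOf σ (p + 1) = b ∧ (wordOf σ p - wordOf σ (p + 2)).natAbs = 1 := by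
  constructor
  · rintro ⟨j, hj, hk, hd⟩
    have hb : σ ⟨j + 1, by omega⟩ = b := by
      rw [show (⟨j + 1, _⟩ : Fin n) = σ⁻¹ b from Fin.ext hk.symm]
      simp
    refine ⟨j, ?_, ?_⟩
    · rw [wordOf_natCast_add_one σ j (by omega), hb]
    · rwa [wordOf_natCast σ j (by omega), wordOf_natCast_add_two σ j hj]
  · rintro ⟨p, hb, hd⟩
    have := wordOf_eq_of_neg σ p
    have := wordOf_eq_of_neg σ (p + 2)
    obtain ⟨j, hj, rfl, -⟩ := exists_natCast_of_wordOf_nonneg σ (u := p) (by omega)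
    have hj2 : j + 2 < n := by
      have := (wordOf_nonneg_iff σ (j + 2)).1 (by omega)
      omega
    refine ⟨j, hj2, ?_, by rwa [wordOf_natCast σ j hj, wordOf_natCast_add_two σ j hj2] at hd⟩
    rw [wordOf_natCast_add_one σ j (by omega)] at hb
    have hb' : σ ⟨j + 1, by omega⟩ = b := Fin.ext (by exact_mod_cast hb)
    simp [← hb']

lemma isHSepVal_iff (b : Fin n) : IsHSepVal σ b ↔
    ∃ p, (wordOf σ p - wordOf σ (p + 1)).natAbs = 2 ∧
      wordOf σ p + wordOf σ (p + 1) = 2 * b := by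
  constructor
  · rintro ⟨j, hj, hd, hs⟩
    refine ⟨j, ?_, ?_⟩ <;> rwa [wordOf_natCast σ j (by omega), wordOf_natCast_add_one σ j hj]
  · rintro ⟨p, hd, hs⟩
    have := wordOf_eq_of_neg σ p
    have := wordOf_eq_of_neg σ (p + 1)
    obtain ⟨j, hj, rfl, -⟩ := exists_natCast_of_wordOf_nonneg σ (u := p) (by omega)
    have hj1 : j + 1 < n := by
      have := (wordOf_nonneg_iff σ (j + 1)).1 (by omega)
      omega
    rw [wordOf_natCast σ j hj, wordOf_natCast_add_one σ j hj1] at hd hs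
    exact ⟨j, hj1, hd, hs⟩

lemma isSeparator_wordOf_iff (b : Fin n) :
    IsVSepVal σ b ∨ IsHSepVal σ b ↔ IsSeparator (wordOf σ) b :=
  or_congr (isVSepVal_iff σ b) (isHSepVal_iff σ b)

lemma isSeparatorWord_wordOf (hs : ∀ b : Fin n, IsSeparator (wordOf σ) b) :
    IsSeparatorWord n (wordOf σ) where
  nonneg := by positivity
  lt := wordOf_lt σ
  nonneg_iff := wordOf_nonneg_iff σ
  eq_of_neg := wordOf_eq_of_neg σ
  inj u v huv hu := by
    obtain ⟨i, hi, rfl, hwi⟩ := exists_natCast_of_wordOf_nonneg σ hu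
    obtain ⟨j, hj, rfl, hwj⟩ := exists_natCast_of_wordOf_nonneg σ (u := v) (huv ▸ hu)
    have := σ.injective (Fin.ext (by exact_mod_cast hwi.symm.trans (huv.trans hwj)))
    simp_all
  surj b hb hbN := by
    lift b to ℕ using hb
    refine ⟨(σ⁻¹ ⟨b, by omega⟩ : Fin n), ?_⟩
    simp [wordOf_natCast]
  sep b hb hbN := by
    lift b to ℕ using hb
    exact hs ⟨b, by omega⟩

lemma exists_inflation {k : ℕ} (h : IsSeparatorWord n (wordOf σ))
    (hblock : ∀ q : Fin k, ∃ p : Fin k, IsBlock (wordOf σ) (4 * (p : ℕ)) (4 * (q : ℕ))) :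
    ∃ (π : Equiv.Perm (Fin k)) (α : Fin k → (Fin 4 → Fin 4)),
      (∀ q, α q = ![2, 0, 3, 1] ∨ α q = ![1, 3, 0, 2]) ∧
      ∀ (q : Fin k) (r : Fin 4) (h : 4 * (q : ℕ) + (r : ℕ) < n),
        (σ ⟨4 * (q : ℕ) + (r : ℕ), h⟩).val = 4 * (π q : ℕ) + (α q r : ℕ) := by
  choose p hp using hblock
  have hinj : Function.Injective p := fun q q' hpq => by
    have := h.eq_of_isBlock (hp q) (hpq ▸ hp q')
    omega
  choose α hα hσ using fun q => isBlock_iff_pattern.1 (hp q)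
  refine ⟨Equiv.ofBijective p (Finite.injective_iff_bijective.1 hinj), α, hα,
    fun q r hqr => ?_⟩
  have e := wordOf_natCast σ _ hqr
  push_cast at e
  have := hσ q r
  simp only [Equiv.ofBijective_apply]
  omega

lemma blocksBelow_of_inflation {k : ℕ} (hk : n = 4 * k) (π : Equiv.Perm (Fin k))
    (α : Fin k → (Fin 4 → Fin 4)) (hα : ∀ q, α q = ![2, 0, 3, 1] ∨ α q = ![1, 3, 0, 2])
    (hσ : ∀ (q : Fin k) (r : Fin 4) (h : 4 * (q : ℕ) + (r : ℕ) < n),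
      (σ ⟨4 * (q : ℕ) + (r : ℕ), h⟩).val = 4 * (π q : ℕ) + (α q r : ℕ)) :
    BlocksBelow (wordOf σ) n := by
  intro p hp hpn
  set q := π.symm ⟨p.toNat, by omega⟩
  have hq : (π q : ℕ) = p.toNat := by simp [q]
  refine ⟨4 * (q : ℕ), isBlock_iff_pattern.2 ⟨α q, hα q, fun r => ?_⟩⟩
  have hqr : 4 * (q : ℕ) + r < n := by omega
  have e := wordOf_natCast σ _ hqr
  push_cast at e
  have := hσ q r hqr
  omega

end wordOf

end Separators

/-- every entry of `σ ∈ S_n` is a separator iff `n = 4k` (`k ≥ 1`)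
and `σ` is an inflation `π[α₁,…,α_k]` with `π ∈ S_k` and each
`αᵢ ∈ {[3142],[2413]}` (0-indexed: `![2,0,3,1]` or `![1,3,0,2]`). -/
theorem stmt7 {n : ℕ} (hn : 0 < n) (σ : Equiv.Perm (Fin n)) :
    (∀ b : Fin n, IsVSepVal σ b ∨ IsHSepVal σ b) ↔
      ∃ k : ℕ, 0 < k ∧ n = 4 * k ∧
        ∃ (π : Equiv.Perm (Fin k)) (α : Fin k → (Fin 4 → Fin 4)),
          (∀ q, α q = ![2, 0, 3, 1] ∨ α q = ![1, 3, 0, 2]) ∧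
          ∀ (q : Fin k) (r : Fin 4) (h : 4 * (q : ℕ) + (r : ℕ) < n),
            (σ ⟨4 * (q : ℕ) + (r : ℕ), h⟩).val = 4 * (π q : ℕ) + (α q r : ℕ) := by
  simp only [Separators.isSeparator_wordOf_iff]
  constructor
  · intro hs
    have h := Separators.isSeparatorWord_wordOf σ hs
    obtain ⟨k, hk, hB⟩ := h.exists_eq_four_mul_blocksBelow
    exact ⟨k, by omega, by omega,
      Separators.exists_inflation σ h (h.exists_aligned_blocks hB hk)⟩
  · rintro ⟨k, -, hk, π, α, hα, hσ⟩ b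
    exact (Separators.blocksBelow_of_inflation σ hk π α hα hσ).isSeparator
      (by omega) (by omega)
end

section
/- If σ = π[α_1, …, α_k] is an inflation of π ∈ S_k by blocks α_i ∈ {[3142], [2413]}, then every digit of σ ∈ S_{4k} is a separator. -/
/-! A separator is witnessed by two or three consecutive entries whose values differ by `1` or
`2`. If every digit of a block pattern `τ` is a separator, its witnesses lie inside the block,
and on a block `σ (s + i) = c + τ i` of an inflation they witness the same for `σ`, since shifting
all values by `c` changes neither differences nor midpoints. Every digit of `[3142]` and of its
inverse `[2413]` is a separator by inspection. -/

open Equiv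

def IsSeparator {n : ℕ} (σ : Perm (Fin n)) (b : Fin n) : Prop :=
  IsVSepVal σ b ∨ IsHSepVal σ b

section Block

variable {n m : ℕ} (σ : Perm (Fin n)) (τ : Perm (Fin m)) {s c : ℕ}
  (hblock : ∀ (i : Fin m) (h : s + i < n), ((σ ⟨s + i, h⟩ : Fin n) : ℕ) = c + τ i)
include hblock

theorem val_apply_of_block {p : ℕ} (hp : p < n) (i : Fin m) (hpi : p = s + i) :
    ((σ ⟨p, hp⟩ : Fin n) : ℕ) = c + τ i := by
  subst hpi
  exact hblock i hp

variable (hs : s + m ≤ n)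
include hs

theorem IsVSepPos.of_block {i : Fin m} (h : IsVSepPos τ i) :
    IsVSepPos σ ⟨s + i, by omega⟩ := by
  obtain ⟨j, hj, hij, hsep⟩ := h
  refine ⟨s + j, by omega, by simp only [hij]; omega, ?_⟩
  rw [val_apply_of_block σ τ hblock _ ⟨j, by omega⟩ rfl,
    val_apply_of_block σ τ hblock _ ⟨j + 2, hj⟩ (Nat.add_assoc _ _ _)]
  omega

theorem IsHSepVal.of_block {i : Fin m} (h : IsHSepVal τ (τ i)) :
    IsHSepVal σ (σ ⟨s + i, by omega⟩) := by
  obtain ⟨j, hj, hdiff, hsum⟩ := h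
  refine ⟨s + j, by omega, ?_, ?_⟩ <;>
  rw [val_apply_of_block σ τ hblock _ ⟨j, by omega⟩ rfl,
    val_apply_of_block σ τ hblock _ ⟨j + 1, hj⟩ (Nat.add_assoc _ _ _)]
  · omega
  · rw [hblock i]
    omega

theorem IsSeparator.of_block {i : Fin m} (h : IsSeparator τ (τ i)) :
    IsSeparator σ (σ ⟨s + i, by omega⟩) := by
  simp only [IsSeparator, IsVSepVal, Perm.coe_inv, symm_apply_apply] at h ⊢
  exact h.imp (IsVSepPos.of_block σ τ hblock hs) (IsHSepVal.of_block σ τ hblock hs)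

end Block

theorem isSeparator_of_blocks {n m k : ℕ} (hk : n = m * k) (σ : Perm (Fin n))
    (c : Fin k → ℕ) (τ : Fin k → Perm (Fin m)) (hτ : ∀ q b, IsSeparator (τ q) b)
    (hσ : ∀ (q : Fin k) (r : Fin m) (h : m * q + r < n),
      ((σ ⟨m * q + r, h⟩ : Fin n) : ℕ) = c q + τ q r)
    (b : Fin n) : IsSeparator σ b := by
  set p := σ⁻¹ b
  have hp : (p : ℕ) < m * k := hk ▸ p.isLt
  have hm : 0 < m := Nat.pos_of_ne_zero (by rintro rfl; omega)
  let q : Fin k := ⟨p / m, Nat.div_lt_of_lt_mul hp⟩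
  let r : Fin m := ⟨p % m, Nat.mod_lt _ hm⟩
  have hs : m * q + m ≤ n :=
    calc m * q + m = m * (q + 1) := (Nat.mul_succ m q).symm
      _ ≤ m * k := Nat.mul_le_mul_left m q.isLt
      _ = n := hk.symm
  have hpqr : (⟨m * q + r, by omega⟩ : Fin n) = p := Fin.ext (Nat.div_add_mod p m)
  have := IsSeparator.of_block σ (τ q) (hσ q) hs (hτ q (τ q r))
  rwa [hpqr, show σ p = b from σ.apply_symm_apply b] at this

/-- `[3142]`, written 0-indexed; its inverse is `[2413]`. -/
def perm3142 : Perm (Fin 4) := ⟨![2, 0, 3, 1], ![1, 3, 0, 2], by decide, by decide⟩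

theorem isSeparator_perm3142 (b : Fin 4) : IsSeparator perm3142 b := by
  fin_cases b
  · exact Or.inl ⟨0, by norm_num, rfl, rfl⟩
  · exact Or.inr ⟨0, by norm_num, rfl, rfl⟩
  · exact Or.inr ⟨2, by norm_num, rfl, rfl⟩
  · exact Or.inl ⟨1, by norm_num, rfl, rfl⟩

theorem isSeparator_perm3142_symm (b : Fin 4) : IsSeparator perm3142.symm b := by
  fin_cases b
  · exact Or.inl ⟨1, by norm_num, rfl, rfl⟩
  · exact Or.inr ⟨2, by norm_num, rfl, rfl⟩
  · exact Or.inr ⟨0, by norm_num, rfl, rfl⟩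
  · exact Or.inl ⟨0, by norm_num, rfl, rfl⟩

/-- if `σ ∈ S_{4k}` is an inflation `π[α₁,…,α_k]` with each
`αᵢ ∈ {[3142],[2413]}` (0-indexed: `![2,0,3,1]` or `![1,3,0,2]`),
then every digit of `σ` is a separator. -/
theorem stmt9 {n k : ℕ} (hk : n = 4 * k) (σ : Equiv.Perm (Fin n))
    (π : Equiv.Perm (Fin k)) (α : Fin k → (Fin 4 → Fin 4))
    (hα : ∀ q, α q = ![2, 0, 3, 1] ∨ α q = ![1, 3, 0, 2])
    (hσ : ∀ (q : Fin k) (r : Fin 4) (h : 4 * (q : ℕ) + (r : ℕ) < n),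
      (σ ⟨4 * (q : ℕ) + (r : ℕ), h⟩).val = 4 * (π q : ℕ) + (α q r : ℕ)) :
    ∀ b : Fin n, IsVSepVal σ b ∨ IsHSepVal σ b := by
  have hτ : ∀ q, ∃ τ : Perm (Fin 4), (∀ b, IsSeparator τ b) ∧ α q = ⇑τ := fun q =>
    (hα q).elim (fun h => ⟨perm3142, isSeparator_perm3142, h⟩)
      (fun h => ⟨perm3142.symm, isSeparator_perm3142_symm, h⟩)
  choose τ hτsep hατ using hτ
  exact isSeparator_of_blocks hk σ (fun q => 4 * (π q : ℕ)) τ hτsep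
    (fun q r h => hατ q ▸ hσ q r h)
end

section
/- Let σ ∈ S_n contain a bond (a, a+1) in adjacent positions, with the value a+1 immediately followed by a−1 (so σ contains consecutive entries a, a+1, a−1, i.e., a+1 is a vertical separator via this configuration), and suppose moreover every digit of σ is a separator. Then a contradiction follows; i.e., no permutation all of whose digits are separators contains the consecutive pattern a, a+1 with a+1 a vertical separator. -/
open scoped Pointwise

def ValAt (D : Set ℤ) (f : ℤ → ℤ) (p v : ℤ) : Prop := p ∈ D ∧ f p = v

def IsVSep (D : Set ℤ) (f : ℤ → ℤ) (p : ℤ) : Prop :=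
  p - 1 ∈ D ∧ p + 1 ∈ D ∧ |f (p - 1) - f (p + 1)| = 1

def AdjacentIn (D : Set ℤ) (f : ℤ → ℤ) (u v : ℤ) : Prop :=
  ∃ q, (ValAt D f q u ∧ ValAt D f (q + 1) v) ∨ (ValAt D f q v ∧ ValAt D f (q + 1) u)

def IsHSep (D : Set ℤ) (f : ℤ → ℤ) (p : ℤ) : Prop :=
  AdjacentIn D f (f p - 1) (f p + 1)

structure IsAllSeparators (D : Set ℤ) (f : ℤ → ℤ) : Prop where
  injOn : Set.InjOn f D
  isVSep_or_isHSep : ∀ p ∈ D, IsVSep D f p ∨ IsHSep D f p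

section

variable {D : Set ℤ} {f : ℤ → ℤ} {p q r u v : ℤ}

lemma valAt_neg : ValAt D (-f) p v ↔ ValAt D f p (-v) := by
  simp only [ValAt, Pi.neg_apply, neg_eq_iff_eq_neg]

lemma valAt_reflect : ValAt (-D) (f ∘ Neg.neg) p v ↔ ValAt D f (-p) v := Iff.rfl

lemma ValAt.eq_of_injOn (hf : Set.InjOn f D) (hp : ValAt D f p u) (hq : ValAt D f q v)
    (huv : u = v) : p = q :=
  hf hp.1 hq.1 (by rw [hp.2, hq.2, huv])

lemma AdjacentIn.symm (h : AdjacentIn D f u v) : AdjacentIn D f v u :=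
  let ⟨q, hq⟩ := h; ⟨q, hq.symm⟩

lemma AdjacentIn.neighbor (hf : Set.InjOn f D) (h : AdjacentIn D f u v) (hr : ValAt D f r u) :
    ValAt D f (r - 1) v ∨ ValAt D f (r + 1) v := by
  obtain ⟨q, ⟨hqu, hqv⟩ | ⟨hqv, hqu⟩⟩ := h
  · obtain rfl := hqu.eq_of_injOn hf hr rfl
    exact .inr hqv
  · obtain rfl := hqu.eq_of_injOn hf hr rfl
    exact .inl (by simpa using hqv)

lemma IsVSep.valAt_succ (h : IsVSep D f p) (hv : f (p - 1) = v) :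
    ValAt D f (p + 1) (v - 1) ∨ ValAt D f (p + 1) (v + 1) := by
  obtain ⟨-, hmem, habs⟩ := h
  rcases abs_eq (zero_le_one' ℤ) |>.mp habs with h | h
  · exact .inl ⟨hmem, by omega⟩
  · exact .inr ⟨hmem, by omega⟩

namespace IsAllSeparators

lemma neg (hf : IsAllSeparators D f) : IsAllSeparators D (-f) := by
  refine ⟨fun p hp q hq h => hf.injOn hp hq (neg_inj.mp h), fun p hp => ?_⟩
  rcases hf.isVSep_or_isHSep p hp with ⟨h₁, h₂, habs⟩ | ⟨q, hq⟩
  · exact .inl ⟨h₁, h₂, by rwa [Pi.neg_apply, Pi.neg_apply, neg_sub_neg, abs_sub_comm]⟩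
  · refine .inr ⟨q, ?_⟩
    simpa only [valAt_neg, Pi.neg_apply, neg_sub', neg_neg, neg_add', sub_neg_eq_add] using hq.symm

lemma reflect (hf : IsAllSeparators D f) : IsAllSeparators (-D) (f ∘ Neg.neg) := by
  refine ⟨hf.injOn.comp neg_injective.injOn fun _ h => h, fun p hp => ?_⟩
  have hpred : -(p - 1) = -p + 1 := by ring
  have hsucc : -(p + 1) = -p - 1 := by ring
  rcases hf.isVSep_or_isHSep (-p) hp with ⟨h₁, h₂, habs⟩ | ⟨q, hq⟩
  · refine .inl ⟨?_, ?_, ?_⟩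
    · rwa [Set.mem_neg, hpred]
    · rwa [Set.mem_neg, hsucc]
    · rwa [Function.comp_apply, Function.comp_apply, hpred, hsucc, abs_sub_comm]
  · refine .inr ⟨-q - 1, ?_⟩
    simp only [valAt_reflect, Function.comp_apply, neg_sub, sub_neg_eq_add, sub_add_cancel,
      add_comm (1 : ℤ), neg_neg]
    exact hq.symm.imp And.symm And.symm

lemma zigzag_extend (hf : IsAllSeparators D f) {x y : ℤ} (hx : ValAt D f p x)
    (hy : ValAt D f (p + 1) y) (hx' : ValAt D f (p + 2) (x - 1)) (hxy : x < y)
    (hr : ValAt D f r (y - 1)) (hrp : r ≤ p) :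
    ValAt D f (p - 1) (x - 2) ∨ ValAt D f (p + 3) (y + 1) := by
  rcases hf.isVSep_or_isHSep (p + 2) hx'.1 with hV | hH
  · rcases hV.valAt_succ (v := y) (by convert hy.2 using 2; ring) with h | h
    · exact absurd (h.eq_of_injOn hf.injOn hr rfl) (by omega)
    · exact .inr (by convert h using 1; ring)
  · rw [IsHSep, hx'.2] at hH
    rcases hH.symm.neighbor hf.injOn (by convert hx using 1; ring) with h | h
    · exact .inl (by convert h using 1; ring)
    · have := h.2.symm.trans hy.2
      omega

end IsAllSeparators

lemma Set.Finite.exists_sub_le (hD : D.Finite) : ∃ C, ∀ a ∈ D, ∀ b ∈ D, b - a ≤ C :=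
  let ⟨M, hM⟩ := hD.bddAbove
  let ⟨m, hm⟩ := hD.bddBelow
  ⟨M - m, fun _ ha _ hb => sub_le_sub (hM hb) (hm ha)⟩

def IsZigzagAt (D : Set ℤ) (f : ℤ → ℤ) (p : ℤ) : Prop :=
  ∃ x y, x < y ∧ ValAt D f (p - 1) (y - 1) ∧ ValAt D f p x ∧ ValAt D f (p + 1) y ∧
    ValAt D f (p + 2) (x - 1)

namespace IsZigzagAt

lemma neg_succ (hf : IsAllSeparators D f) (h : IsZigzagAt D f p) :
    IsZigzagAt D (-f) (p + 1) := by
  obtain ⟨x, y, hxy, h₀, h₁, h₂, h₃⟩ := h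
  have h₄ : ValAt D f (p + 3) (y + 1) := by
    refine (hf.zigzag_extend h₁ h₂ h₃ hxy h₀ (by omega)).resolve_left fun h => ?_
    have := h.2.symm.trans h₀.2
    omega
  refine ⟨-y, 1 - x, by omega, ?_, ?_, ?_, ?_⟩ <;> rw [valAt_neg]
  · convert h₁ using 1 <;> ring
  · convert h₂ using 1; ring
  · convert h₃ using 1 <;> ring
  · convert h₄ using 1 <;> ring

lemma add_mem (k : ℕ) (hf : IsAllSeparators D f) (h : IsZigzagAt D f p) : p + k ∈ D := by
  induction k generalizing f p with
  | zero => obtain ⟨x, y, -, -, h₁, -⟩ := h; simpa using h₁.1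
  | succ k ih => simpa [add_assoc, add_comm (1 : ℤ)] using ih hf.neg (h.neg_succ hf)

lemma infinite (hf : IsAllSeparators D f) (h : IsZigzagAt D f p) : D.Infinite := by
  intro hD
  obtain ⟨C, hC⟩ := hD.exists_sub_le
  have := hC _ (h.add_mem 0 hf) _ (h.add_mem (C + 1).toNat hf)
  omega

end IsZigzagAt

def IsSpiral (D : Set ℤ) (f : ℤ → ℤ) (L R : ℤ) : Prop :=
  ∃ w, L < R ∧ ValAt D f L (w + 1) ∧ ValAt D f (L + 1) (w + 3) ∧ ValAt D f (R - 1) (w + 2) ∧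
    ValAt D f R w

namespace IsSpiral

variable {L R : ℤ}

lemma reflect (hf : IsAllSeparators D f) (h : IsSpiral D f L R) :
    IsSpiral (-D) (f ∘ Neg.neg) (-R) (1 - L) := by
  obtain ⟨w, hLR, hL, hL₁, hR₁, hR⟩ := h
  have hL₀ : ValAt D f (L - 1) (w - 1) := by
    rcases hf.isVSep_or_isHSep R hR.1 with hV | hH
    · rcases hV.valAt_succ hR₁.2 with h | h
      · exact absurd (h.eq_of_injOn hf.injOn hL (by ring)) (by omega)
      · exact absurd (h.eq_of_injOn hf.injOn hL₁ (by ring)) (by omega)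
    · rw [IsHSep, hR.2] at hH
      rcases hH.symm.neighbor hf.injOn hL with h | h
      · exact h
      · have := h.2.symm.trans hL₁.2
        omega
  refine ⟨w - 1, by omega, ?_, ?_, ?_, ?_⟩ <;> rw [valAt_reflect]
  · convert hR using 1 <;> ring
  · convert hR₁ using 1 <;> ring
  · convert hL using 1 <;> ring
  · convert hL₀ using 1; ring

lemma exists_sub_ge (k : ℕ) (hf : IsAllSeparators D f) (h : IsSpiral D f L R) :
    ∃ a ∈ D, ∃ b ∈ D, R - L + k ≤ b - a := by
  induction k generalizing D f L R with
  | zero => obtain ⟨w, -, hL, -, -, hR⟩ := h; exact ⟨L, hL.1, R, hR.1, by simp⟩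
  | succ k ih =>
    obtain ⟨a, ha, b, hb, hab⟩ := ih hf.reflect (h.reflect hf)
    exact ⟨-b, hb, -a, ha, by push_cast; linarith⟩

lemma infinite (hf : IsAllSeparators D f) (h : IsSpiral D f L R) : D.Infinite := by
  intro hD
  obtain ⟨C, hC⟩ := hD.exists_sub_le
  obtain ⟨a, ha, b, hb, hab⟩ := h.exists_sub_ge (C + 1).toNat hf
  have := hC a ha b hb
  obtain ⟨w, hLR, -⟩ := h
  omega

end IsSpiral

theorem IsAllSeparators.infinite_of_valAt (hf : IsAllSeparators D f) {j a : ℤ}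
    (h₀ : ValAt D f j a) (h₁ : ValAt D f (j + 1) (a + 1)) (h₂ : ValAt D f (j + 2) (a - 1)) :
    D.Infinite := by
  rcases hf.zigzag_extend h₀ h₁ h₂ (by omega) (by simpa using h₀) le_rfl with hprev | h₃
  · -- `IsSpiral` grows at its right end, so the spiral around `j - 1, …, j + 2` is read reversed.
    have hspiral : IsSpiral (-D) (f ∘ Neg.neg) (-(j + 2)) (1 - j) := by
      refine ⟨a - 2, by omega, ?_, ?_, ?_, ?_⟩ <;> rw [valAt_reflect]
      · convert h₂ using 1 <;> ring
      · convert h₁ using 1 <;> ring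
      · convert h₀ using 1 <;> ring
      · convert hprev using 1; ring
    exact Set.infinite_neg.mp (hspiral.infinite hf.reflect)
  · have hzigzag : IsZigzagAt D (-f) (j + 1) := by
      refine ⟨-a - 1, 1 - a, by omega, ?_, ?_, ?_, ?_⟩ <;> rw [valAt_neg]
      · convert h₀ using 1 <;> ring
      · convert h₁ using 1; ring
      · convert h₂ using 1 <;> ring
      · convert h₃ using 1 <;> ring
    exact hzigzag.infinite hf.neg

end

def permWord {n : ℕ} (σ : Equiv.Perm (Fin n)) (p : ℤ) : ℤ :=
  if h : p.toNat < n then ((σ ⟨p.toNat, h⟩ : ℕ) : ℤ) else 0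

section Perm

variable {n : ℕ} (σ : Equiv.Perm (Fin n))

lemma permWord_natCast {i : ℕ} (hi : i < n) : permWord σ i = ((σ ⟨i, hi⟩ : ℕ) : ℤ) := by
  simp [permWord, hi]

lemma valAt_permWord {i : ℕ} (hi : i < n) :
    ValAt (Set.Ico 0 (n : ℤ)) (permWord σ) i ((σ ⟨i, hi⟩ : ℕ) : ℤ) :=
  ⟨⟨by positivity, by exact_mod_cast hi⟩, permWord_natCast σ hi⟩

lemma injOn_permWord : Set.InjOn (permWord σ) (Set.Ico 0 (n : ℤ)) := by
  intro p hp q hq hpq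
  lift p to ℕ using hp.1
  lift q to ℕ using hq.1
  have hp' : p < n := by exact_mod_cast hp.2
  have hq' : q < n := by exact_mod_cast hq.2
  rw [permWord_natCast σ hp', permWord_natCast σ hq', Nat.cast_inj, ← Fin.ext_iff] at hpq
  simpa using σ.injective hpq

variable {σ}

lemma IsVSepPos.isVSep_permWord {i : ℕ} (hi : i < n) (h : IsVSepPos σ ⟨i, hi⟩) :
    IsVSep (Set.Ico 0 (n : ℤ)) (permWord σ) i := by
  obtain ⟨j, hj, rfl, habs⟩ := h
  have hpred : ((j + 1 : ℕ) : ℤ) - 1 = (j : ℕ) := by push_cast; ring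
  have hsucc : ((j + 1 : ℕ) : ℤ) + 1 = (j + 2 : ℕ) := by push_cast; ring
  refine ⟨?_, ?_, ?_⟩
  · rw [hpred]; exact (valAt_permWord σ (by omega)).1
  · rw [hsucc]; exact (valAt_permWord σ hj).1
  · rw [hpred, hsucc, permWord_natCast σ (by omega), permWord_natCast σ hj, Int.abs_eq_natAbs,
      habs, Nat.cast_one]

lemma IsHSepVal.isHSep_permWord {i : ℕ} (hi : i < n) (h : IsHSepVal σ (σ ⟨i, hi⟩)) :
    IsHSep (Set.Ico 0 (n : ℤ)) (permWord σ) i := by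
  obtain ⟨j, hj, hdiff, hsum⟩ := h
  have hv₀ := valAt_permWord σ (show j < n by omega)
  have hv₁ := valAt_permWord σ hj
  rw [Nat.cast_succ] at hv₁
  rw [IsHSep, permWord_natCast σ hi]
  have hvals : (((σ ⟨j, by omega⟩ : ℕ) : ℤ) = (σ ⟨i, hi⟩ : ℕ) - 1 ∧
        ((σ ⟨j + 1, hj⟩ : ℕ) : ℤ) = (σ ⟨i, hi⟩ : ℕ) + 1) ∨
      (((σ ⟨j, by omega⟩ : ℕ) : ℤ) = (σ ⟨i, hi⟩ : ℕ) + 1 ∧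
        ((σ ⟨j + 1, hj⟩ : ℕ) : ℤ) = (σ ⟨i, hi⟩ : ℕ) - 1) := by
    omega
  rcases hvals with ⟨h₀, h₁⟩ | ⟨h₀, h₁⟩
  · exact ⟨j, .inl ⟨h₀ ▸ hv₀, h₁ ▸ hv₁⟩⟩
  · exact ⟨j, .inr ⟨h₀ ▸ hv₀, h₁ ▸ hv₁⟩⟩

lemma isAllSeparators_permWord (hsep : ∀ b : Fin n, IsVSepVal σ b ∨ IsHSepVal σ b) :
    IsAllSeparators (Set.Ico 0 (n : ℤ)) (permWord σ) := by
  refine ⟨injOn_permWord σ, fun p hp => ?_⟩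
  lift p to ℕ using hp.1
  have hp' : p < n := by exact_mod_cast hp.2
  refine (hsep (σ ⟨p, hp'⟩)).imp (fun hv => ?_) (·.isHSep_permWord hp')
  exact IsVSepPos.isVSep_permWord hp' (by simpa [IsVSepVal] using hv)

end Perm

/-- no permutation all of whose digits are separators contains
three consecutive entries `a, a+1, a-1` (a bond `(a, a+1)` whose right element
is a vertical separator). -/
theorem stmt10 {n : ℕ} (σ : Equiv.Perm (Fin n))
    (hsep : ∀ b : Fin n, IsVSepVal σ b ∨ IsHSepVal σ b)
    (j : ℕ) (h : j + 2 < n)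
    (h1 : ((σ ⟨j + 1, by omega⟩).val : ℤ) = ((σ ⟨j, by omega⟩).val : ℤ) + 1)
    (h2 : ((σ ⟨j + 2, h⟩).val : ℤ) = ((σ ⟨j, by omega⟩).val : ℤ) - 1) :
    False := by
  have hv₁ := valAt_permWord σ (show j + 1 < n by omega)
  have hv₂ := valAt_permWord σ h
  rw [h1] at hv₁
  rw [h2] at hv₂
  push_cast at hv₁ hv₂
  exact (isAllSeparators_permWord hsep).infinite_of_valAt
    (valAt_permWord σ (show j < n by omega)) hv₁ hv₂ (Set.finite_Ico 0 (n : ℤ))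
end

section
/- For σ ∈ S_{2k} written as the comb σ = σ^{odd} ⊙ σ^{even}, the number of vertical separators of σ equals the number of bonds of the sequence σ^{odd} plus the number of bonds of the sequence σ^{even}. -/
/-!
The digit at position `j + 1` of `σ` is a vertical separator exactly when the entries at
positions `j` and `j + 2` have consecutive values. These two positions have the parity of `j`,
so for even `j = 2m` they hold the adjacent terms `m, m + 1` of `σ^odd`, and for odd
`j = 2m + 1` the adjacent terms `m, m + 1` of `σ^even`. Splitting the positions `j` by parity
thus matches vertical separators with the bonds of the two subsequences.
-/

def PermSkipBondAt {n : ℕ} (σ : Equiv.Perm (Fin n)) (j : ℕ) (h : j + 2 < n) : Prop :=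
  (((σ ⟨j, by omega⟩).val : ℤ) - ((σ ⟨j + 2, h⟩).val : ℤ)).natAbs = 1

theorem Nat.card_subtype_eq_card_even_add_card_odd {P : ℕ → Prop} {n : ℕ}
    (hP : ∀ j, P j → j < n) :
    Nat.card {j // P j} = Nat.card {m // P (2 * m)} + Nat.card {m // P (2 * m + 1)} := by
  have : Finite {m // P (2 * m)} :=
    ((Set.finite_lt_nat n).subset fun m hm => show m < n by have := hP _ hm; omega).to_subtype
  have : Finite {m // P (2 * m + 1)} :=
    ((Set.finite_lt_nat n).subset fun m hm => show m < n by have := hP _ hm; omega).to_subtype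
  rw [← Nat.card_sum]
  exact Nat.card_congr <| (Equiv.natSumNatEquivNat.symm.subtypeEquiv
    (q := fun s => P (Equiv.natSumNatEquivNat s)) fun j => by
      rw [Equiv.apply_symm_apply]).trans Equiv.subtypeSum

theorem Nat.card_isVSepVal_eq_card_isVSepPos {n : ℕ} (σ : Equiv.Perm (Fin n)) :
    Nat.card {b // IsVSepVal σ b} = Nat.card {i // IsVSepPos σ i} :=
  Nat.card_congr (σ⁻¹.subtypeEquiv fun _ => Iff.rfl)

theorem Nat.card_isVSepPos_eq_card_permSkipBondAt {n : ℕ} (σ : Equiv.Perm (Fin n)) :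
    Nat.card {i // IsVSepPos σ i} = Nat.card {j : ℕ // ∃ h, PermSkipBondAt σ j h} := by
  symm
  refine Nat.card_eq_of_bijective
    (fun j => ⟨⟨j.1 + 1, by have := j.2.1; omega⟩, j.1, j.2.1, rfl, j.2.2⟩) ⟨?_, ?_⟩
  · intro j j' hjj'
    exact Subtype.ext (by simpa using congrArg (fun i => (i.1 : ℕ)) hjj')
  · rintro ⟨i, j, h, hij, hbond⟩
    exact ⟨⟨j, h, hbond⟩, Subtype.ext (Fin.ext hij.symm)⟩

theorem seqBondCount_eq_card_seqBondAt {m : ℕ} (g : Fin m → ℕ) :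
    seqBondCount g = Nat.card {j : ℕ // ∃ h, SeqBondAt g j h} := by
  symm
  refine Nat.card_eq_of_bijective
    (fun j => ⟨(⟨j.1, by have := j.2.1; omega⟩, ⟨j.1 + 1, j.2.1⟩), rfl, j.2.2⟩)
    ⟨?_, ?_⟩
  · intro j j' hjj'
    exact Subtype.ext (by simpa using congrArg (fun p => (p.1.1 : ℕ)) hjj')
  · rintro ⟨⟨a, b, hb⟩, hab, hbond⟩
    dsimp only at hab
    subst hab
    exact ⟨⟨a, hb, hbond⟩, rfl⟩

section Comb

variable {k : ℕ} (σ : Equiv.Perm (Fin (2 * k)))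

theorem exists_permSkipBondAt_two_mul_iff (m : ℕ) :
    (∃ h, PermSkipBondAt σ (2 * m) h) ↔
      ∃ h, SeqBondAt (fun j : Fin k => (σ ⟨2 * (j : ℕ), by omega⟩).val) m h :=
  ⟨fun ⟨_, hbond⟩ => ⟨by omega, hbond⟩, fun ⟨_, hbond⟩ => ⟨by omega, hbond⟩⟩

theorem exists_permSkipBondAt_two_mul_add_one_iff (m : ℕ) :
    (∃ h, PermSkipBondAt σ (2 * m + 1) h) ↔
      ∃ h, SeqBondAt (fun j : Fin k => (σ ⟨2 * (j : ℕ) + 1, by omega⟩).val) m h :=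
  ⟨fun ⟨_, hbond⟩ => ⟨by omega, hbond⟩, fun ⟨_, hbond⟩ => ⟨by omega, hbond⟩⟩

end Comb

/-- for `σ ∈ S_{2k}` written as a comb `σ = σ^odd ⊙ σ^even`,
the number of vertical separators of `σ` is the number of bonds of the
odd-position subsequence plus the number of bonds of the even-position
subsequence. -/
theorem stmt11 (k : ℕ) (σ : Equiv.Perm (Fin (2 * k))) :
    Nat.card {b : Fin (2 * k) // IsVSepVal σ b} =
      seqBondCount (fun j : Fin k => (σ ⟨2 * (j : ℕ), by have := j.isLt; omega⟩).val)
      + seqBondCount (fun j : Fin k => (σ ⟨2 * (j : ℕ) + 1, by have := j.isLt; omega⟩).val) := by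
  rw [Nat.card_isVSepVal_eq_card_isVSepPos, Nat.card_isVSepPos_eq_card_permSkipBondAt,
    Nat.card_subtype_eq_card_even_add_card_odd (n := 2 * k) fun _ ⟨h, _⟩ => by omega,
    seqBondCount_eq_card_seqBondAt, seqBondCount_eq_card_seqBondAt]
  exact congrArg₂ (· + ·)
    (Nat.card_congr (Equiv.subtypeEquivRight (exists_permSkipBondAt_two_mul_iff σ)))
    (Nat.card_congr (Equiv.subtypeEquivRight (exists_permSkipBondAt_two_mul_add_one_iff σ)))
end

section
/- For n ≥ 3 and a fixed value i with 1 < i < n, the number of permutations σ ∈ S_n in which i is a vertical separator equals 2(n−3)(n−2)!. -/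
/-! The position of `a` fixes a window `j, j + 1, j + 2` of `σ`, one of `n - 2`, and distinct
windows give disjoint sets of permutations. Within a window, `(σ j, σ (j + 2))` must be one of
the `2 (n - 3)` ordered pairs of consecutive values avoiding `a`, and each such choice of three
prescribed values extends to `(n - 3)!` permutations, since permutations with prescribed values
on a set form a coset of its pointwise stabilizer. Hence the count `(n - 2) · 2 (n - 3) · (n - 3)!`. -/

open Finset Equiv

lemma injective_vecCons_three {α : Type*} {a b c : α} (hab : a ≠ b) (hac : a ≠ c) (hbc : b ≠ c) :
    Function.Injective ![a, b, c] :=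
  Fin.cons_injective_iff.2 ⟨by simp [hab, hac], injective_pair_iff_ne.2 hbc⟩

section PermCount

variable {α : Type*} [Fintype α] [DecidableEq α]

lemma card_perm_fixing_range {ι : Type*} [Fintype ι] {f : ι → α} (hf : Function.Injective f) :
    Nat.card {σ : Perm α // ∀ i, σ (f i) = f i} = (Fintype.card α - Fintype.card ι).factorial := by
  let p : α → Prop := fun x => x ∉ Set.range f
  have e : {σ : Perm α // ∀ i, σ (f i) = f i} ≃ Perm {x // p x} :=
    (Equiv.subtypeEquivRight fun σ => by simp [p]).trans (Perm.subtypeEquivSubtypePerm p).symm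
  rw [Nat.card_congr e, Nat.card_perm, Nat.card_eq_fintype_card, Fintype.card_subtype_compl,
    Fintype.card_congr (Equiv.ofInjective f hf).symm]

lemma card_perm_extending {ι : Type*} [Fintype ι] {f g : ι → α} (hf : Function.Injective f)
    (hg : Function.Injective g) :
    Nat.card {σ : Perm α // ∀ i, σ (f i) = g i} = (Fintype.card α - Fintype.card ι).factorial := by
  obtain ⟨τ, hτ⟩ := Perm.exists_extending_pair f g hf hg
  rw [← card_perm_fixing_range hf]
  refine Nat.card_congr (Equiv.subtypeEquiv (Equiv.mulLeft τ⁻¹) fun σ => forall_congr' fun i => ?_)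
  rw [coe_mulLeft, Perm.mul_apply, Perm.inv_eq_iff_eq, hτ]

lemma card_perm_apply_eq_and_rel {p₀ p₁ p₂ : α} (h₀₁ : p₀ ≠ p₁) (h₀₂ : p₀ ≠ p₂) (h₁₂ : p₁ ≠ p₂)
    (a : α) (R : α → α → Prop) [DecidableRel R] (hR : ∀ b, ¬ R b b) :
    #{σ : Perm α | σ p₁ = a ∧ R (σ p₀) (σ p₂)}
      = #{q : α × α | R q.1 q.2 ∧ q.1 ≠ a ∧ q.2 ≠ a} * (Fintype.card α - 3).factorial := by
  rw [card_eq_sum_card_fiberwise (f := fun σ : Perm α => (σ p₀, σ p₂))]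
  · refine sum_const_nat fun q hq => ?_
    simp only [mem_filter, mem_univ, true_and] at hq
    obtain ⟨hq, hqa₁, hqa₂⟩ := hq
    have hfiber := card_perm_extending (injective_vecCons_three h₀₁ h₀₂ h₁₂)
      (injective_vecCons_three hqa₁ (fun h => hR _ (h ▸ hq)) hqa₂.symm)
    rw [Nat.card_eq_fintype_card, Fintype.card_subtype, Fintype.card_fin] at hfiber
    rw [← hfiber, filter_filter]
    refine congrArg card (filter_congr fun σ _ => ?_)
    constructor <;> intro h <;> simp_all [Fin.forall_fin_succ, Prod.ext_iff]
  · intro σ hσ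
    simp only [coe_filter, mem_univ, true_and, Set.mem_ofPred_eq] at hσ ⊢
    obtain ⟨rfl, hσR⟩ := hσ
    exact ⟨hσR, fun h => h₀₁ (σ.injective h), fun h => h₁₂ (σ.injective h).symm⟩

end PermCount

lemma card_adjacent_pairs_avoiding {n : ℕ} (a : Fin n) (h₁ : 0 < (a : ℕ)) (h₂ : (a : ℕ) < n - 1) :
    #{q : Fin n × Fin n | ((q.1.val : ℤ) - q.2.val).natAbs = 1 ∧ q.1 ≠ a ∧ q.2 ≠ a}
      = 2 * (n - 3) := by
  have hgaps : #(((range (n - 1)).erase (a - 1)).erase a) = n - 3 := by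
    rw [card_erase_of_mem (by simp; omega), card_erase_of_mem (by simp; omega), card_range]
    omega
  rw [← hgaps, mul_comm, ← Fintype.card_bool, ← card_univ, ← card_product]
  -- an adjacent pair is its smaller entry `k` (with `k, k + 1 ≠ a`) together with an orientation
  refine card_bij (fun q _ => (min q.1.val q.2.val, decide (q.1 < q.2))) ?_ ?_ ?_
  · rintro ⟨b, c⟩ hq
    simp only [mem_filter, mem_univ, true_and, ne_eq, Fin.ext_iff] at hq
    simp only [mem_product, mem_erase, mem_range, mem_univ, and_true]
    omega
  · rintro ⟨b, c⟩ hq ⟨b', c'⟩ hq' h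
    simp only [mem_filter, mem_univ, true_and, ne_eq, Fin.ext_iff] at hq hq'
    simp only [Prod.mk.injEq, decide_eq_decide, Fin.lt_def] at h
    simp only [Prod.mk.injEq, Fin.ext_iff]
    omega
  · rintro ⟨k, t⟩ hk
    simp only [mem_product, mem_erase, mem_range, mem_univ, and_true] at hk
    cases t
    · refine ⟨(⟨k + 1, by omega⟩, ⟨k, by omega⟩), ?_, by simp⟩
      simp only [mem_filter, mem_univ, true_and, ne_eq, Fin.ext_iff]
      omega
    · refine ⟨(⟨k, by omega⟩, ⟨k + 1, by omega⟩), ?_, by simp⟩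
      simp only [mem_filter, mem_univ, true_and, ne_eq, Fin.ext_iff]
      omega

lemma isVSepVal_iff {n : ℕ} (σ : Perm (Fin n)) (a : Fin n) :
    IsVSepVal σ a ↔ ∃ j : Fin (n - 2), σ ⟨j + 1, by omega⟩ = a ∧
      (((σ ⟨j, by omega⟩).val : ℤ) - (σ ⟨j + 2, by omega⟩).val).natAbs = 1 := by
  constructor
  · rintro ⟨j, hj, hpos, hadj⟩
    refine ⟨⟨j, by omega⟩, ?_, hadj⟩
    rw [← Perm.eq_inv_iff_eq]
    exact Fin.ext hpos.symm
  · rintro ⟨j, hpos, hadj⟩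
    refine ⟨j, by omega, ?_, hadj⟩
    rw [Perm.inv_eq_iff_eq.2 hpos.symm]

lemma card_isVSepVal {n : ℕ} (a : Fin n) :
    Nat.card {σ : Perm (Fin n) // IsVSepVal σ a} = ∑ j : Fin (n - 2),
      #{σ : Perm (Fin n) | σ ⟨j + 1, by omega⟩ = a ∧
        (((σ ⟨j, by omega⟩).val : ℤ) - (σ ⟨j + 2, by omega⟩).val).natAbs = 1} := by
  classical
  rw [Nat.card_eq_fintype_card, Fintype.card_subtype, ← card_biUnion]
  · congr 1
    ext σ
    simp [isVSepVal_iff]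
  · refine fun j _ k _ hjk => disjoint_filter.2 fun σ _ hj hk => hjk (Fin.ext ?_)
    simpa using σ.injective (hj.1.trans hk.1.symm)

lemma card_vSep_at_window {n : ℕ} (a : Fin n) (h₁ : 0 < (a : ℕ)) (h₂ : (a : ℕ) < n - 1)
    (j : Fin (n - 2)) :
    #{σ : Perm (Fin n) | σ ⟨j + 1, by omega⟩ = a ∧
        (((σ ⟨j, by omega⟩).val : ℤ) - (σ ⟨j + 2, by omega⟩).val).natAbs = 1}
      = 2 * (n - 3) * (n - 3).factorial := by
  rw [card_perm_apply_eq_and_rel (by simp [Fin.ext_iff]) (by simp [Fin.ext_iff])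
    (by simp [Fin.ext_iff]) a (fun b c => ((b.val : ℤ) - c.val).natAbs = 1) (by simp),
    card_adjacent_pairs_avoiding a h₁ h₂, Fintype.card_fin]

theorem stmt13_general {n : ℕ} (a : Fin n) (h1 : 0 < (a : ℕ)) (h2 : (a : ℕ) < n - 1) :
    Nat.card {σ : Equiv.Perm (Fin n) // IsVSepVal σ a}
      = 2 * (n - 3) * (n - 2).factorial := by
  rw [card_isVSepVal, sum_const_nat fun j _ => card_vSep_at_window a h1 h2 j, card_univ,
    Fintype.card_fin]
  obtain ⟨m, rfl⟩ : ∃ m, n = m + 3 := ⟨n - 3, by omega⟩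
  simp only [Nat.add_sub_cancel, show m + 3 - 2 = m + 1 by omega, Nat.factorial_succ]
  ring

/-- for a fixed non-extreme value `a` (i.e. `1 < i < n`,
0-indexed `0 < a < n-1`), the number of `σ ∈ S_n` in which `a` is a vertical
separator is `2(n-3)(n-2)!`. -/
theorem stmt13 {n : ℕ} (hn : 3 ≤ n) (a : Fin n) (h1 : 0 < (a : ℕ)) (h2 : (a : ℕ) < n - 1) :
    Nat.card {σ : Equiv.Perm (Fin n) // IsVSepVal σ a}
      = 2 * (n - 3) * (n - 2).factorial :=
  stmt13_general a h1 h2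
end

section
/- The expected number of vertical separators of a uniformly random permutation of S_n (n ≥ 3) is 2(n−2)/n. -/
open Finset Equiv

private lemma cardFixTwo {n : ℕ} (p q a b : Fin n) (hpq : p ≠ q) (hab : a ≠ b) :
    (univ.filter (fun σ : Equiv.Perm (Fin n) => σ p = a ∧ σ q = b)).card
      = (n - 2).factorial := by
  classical
  rw [← Fintype.card_subtype]
  set s : Equiv.Perm (Fin n) := Equiv.swap p a with hs
  have hsqa : s q ≠ a := by
    intro h
    apply hpq
    have := congrArg s h
    rw [Equiv.swap_apply_self, Equiv.swap_apply_right] at this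
    exact this.symm
  set τ : Equiv.Perm (Fin n) := (Equiv.swap (s q) b) * s with hτ
  have hτp : τ p = a := by
    have : s p = a := Equiv.swap_apply_left p a
    simp only [hτ, Equiv.Perm.mul_apply, this]
    exact Equiv.swap_apply_of_ne_of_ne (Ne.symm hsqa) hab
  have hτq : τ q = b := by
    simp only [hτ, Equiv.Perm.mul_apply]
    exact Equiv.swap_apply_left _ _
  have e1 : {σ : Equiv.Perm (Fin n) // σ p = a ∧ σ q = b}
      ≃ {σ : Equiv.Perm (Fin n) // σ p = p ∧ σ q = q} :=
  { toFun := fun σ => ⟨τ⁻¹ * σ.1, by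
      obtain ⟨σ, h1, h2⟩ := σ
      constructor
      · simp [Equiv.Perm.mul_apply, h1, ← hτp]
      · simp [Equiv.Perm.mul_apply, h2, ← hτq]⟩
    invFun := fun σ => ⟨τ * σ.1, by
      obtain ⟨σ, h1, h2⟩ := σ
      constructor
      · simp [Equiv.Perm.mul_apply, h1, hτp]
      · simp [Equiv.Perm.mul_apply, h2, hτq]⟩
    left_inv := fun σ => by ext x; simp [Equiv.Perm.mul_apply]
    right_inv := fun σ => by ext x; simp [Equiv.Perm.mul_apply] }
  have e2 : {σ : Equiv.Perm (Fin n) // σ p = p ∧ σ q = q}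
      ≃ {f : Equiv.Perm (Fin n) // ∀ x, ¬(x ≠ p ∧ x ≠ q) → f x = x} :=
    Equiv.subtypeEquivRight (by
      intro f
      constructor
      · intro h x hx
        rcases not_and_or.mp hx with hx | hx
        · rw [not_not.mp hx]; exact h.1
        · rw [not_not.mp hx]; exact h.2
      · intro h
        exact ⟨h p (by simp), h q (by simp)⟩)
  have e3 := (Equiv.Perm.subtypeEquivSubtypePerm (fun x : Fin n => x ≠ p ∧ x ≠ q)).symm
  rw [Fintype.card_congr ((e1.trans e2).trans e3), Fintype.card_perm]
  congr 1
  rw [Fintype.card_subtype]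
  have : (univ.filter (fun x : Fin n => x ≠ p ∧ x ≠ q)) = univ \ {p, q} := by
    ext x; simp [mem_sdiff, not_or]
  rw [this, Finset.card_sdiff_of_subset (by simp)]
  rw [Finset.card_univ, Fintype.card_fin]
  congr 1
  rw [Finset.card_insert_of_notMem (by simpa using hpq), Finset.card_singleton]

private lemma cardAdj {n : ℕ} (hn : 1 ≤ n) :
    (univ.filter (fun ab : Fin n × Fin n =>
        (((ab.1 : ℕ) : ℤ) - ((ab.2 : ℕ) : ℤ)).natAbs = 1)).card = 2 * (n - 1) := by
  classical
  have hsplit : (univ.filter (fun ab : Fin n × Fin n =>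
        (((ab.1 : ℕ) : ℤ) - ((ab.2 : ℕ) : ℤ)).natAbs = 1))
      = (univ.filter (fun ab : Fin n × Fin n => (ab.2 : ℕ) = (ab.1 : ℕ) + 1))
        ∪ (univ.filter (fun ab : Fin n × Fin n => (ab.1 : ℕ) = (ab.2 : ℕ) + 1)) := by
    ext ab
    simp only [mem_filter, mem_union, mem_univ, true_and]
    omega
  rw [hsplit, Finset.card_union_of_disjoint (by
    rw [Finset.disjoint_filter]
    intro ab _ h1 h2
    omega)]
  have h1 : (univ.filter (fun ab : Fin n × Fin n => (ab.2 : ℕ) = (ab.1 : ℕ) + 1))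
      = Finset.image (fun i : Fin (n-1) =>
          ((⟨(i : ℕ), by have := i.isLt; omega⟩ : Fin n),
           (⟨(i : ℕ) + 1, by have := i.isLt; omega⟩ : Fin n))) univ := by
    ext ab
    simp only [mem_filter, mem_image, mem_univ, true_and]
    constructor
    · intro h
      refine ⟨⟨(ab.1 : ℕ), by have := ab.2.isLt; omega⟩, ?_⟩
      refine Prod.ext (Fin.ext rfl) (Fin.ext ?_)
      simpa using h.symm
    · rintro ⟨i, rfl⟩
      rfl
  have h2 : (univ.filter (fun ab : Fin n × Fin n => (ab.1 : ℕ) = (ab.2 : ℕ) + 1))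
      = Finset.image (fun i : Fin (n-1) =>
          ((⟨(i : ℕ) + 1, by have := i.isLt; omega⟩ : Fin n),
           (⟨(i : ℕ), by have := i.isLt; omega⟩ : Fin n))) univ := by
    ext ab
    simp only [mem_filter, mem_image, mem_univ, true_and]
    constructor
    · intro h
      refine ⟨⟨(ab.2 : ℕ), by have := ab.1.isLt; omega⟩, ?_⟩
      refine Prod.ext (Fin.ext ?_) (Fin.ext rfl)
      simpa using h.symm
    · rintro ⟨i, rfl⟩
      rfl
  rw [h1, h2, Finset.card_image_of_injective _ (by
      intro i j hij
      have := congrArg (fun x => ((x : Fin n × Fin n).1 : ℕ)) hij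
      exact Fin.ext this),
    Finset.card_image_of_injective _ (by
      intro i j hij
      have := congrArg (fun x => ((x : Fin n × Fin n).2 : ℕ)) hij
      exact Fin.ext this),
    Finset.card_univ, Fintype.card_fin]
  ring

private lemma cardAdjPair {n : ℕ} (hn : 3 ≤ n) (p q : Fin n) (hpq : p ≠ q) :
    (univ.filter (fun σ : Equiv.Perm (Fin n) =>
        (((σ p).val : ℤ) - ((σ q).val : ℤ)).natAbs = 1)).card
      = 2 * (n - 1) * (n - 2).factorial := by
  classical
  set A : Finset (Fin n × Fin n) := univ.filter (fun ab : Fin n × Fin n =>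
      (((ab.1 : ℕ) : ℤ) - ((ab.2 : ℕ) : ℤ)).natAbs = 1) with hA
  have key : ∀ σ : Equiv.Perm (Fin n),
      (if (((σ p).val : ℤ) - ((σ q).val : ℤ)).natAbs = 1 then 1 else 0)
        = ∑ ab ∈ A, (if σ p = ab.1 ∧ σ q = ab.2 then (1:ℕ) else 0) := by
    intro σ
    rw [hA, Finset.sum_filter]
    rw [Finset.sum_eq_single (σ p, σ q)]
    · simp
    · intro ab _ hne
      split_ifs with h1 h2
      · exact absurd (Prod.ext h2.1.symm h2.2.symm) hne
      · rfl
      · rfl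
    · simp
  rw [Finset.card_filter]
  calc ∑ σ : Equiv.Perm (Fin n),
        (if (((σ p).val : ℤ) - ((σ q).val : ℤ)).natAbs = 1 then 1 else 0)
      = ∑ σ : Equiv.Perm (Fin n), ∑ ab ∈ A,
          (if σ p = ab.1 ∧ σ q = ab.2 then (1:ℕ) else 0) := by
        exact Finset.sum_congr rfl (fun σ _ => key σ)
    _ = ∑ ab ∈ A, ∑ σ : Equiv.Perm (Fin n),
          (if σ p = ab.1 ∧ σ q = ab.2 then (1:ℕ) else 0) := Finset.sum_comm
    _ = ∑ ab ∈ A, (n - 2).factorial := by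
        refine Finset.sum_congr rfl (fun ab hab => ?_)
        rw [← Finset.card_filter]
        have habne : ab.1 ≠ ab.2 := by
          rw [hA, mem_filter] at hab
          intro h
          rw [h] at hab
          omega
        exact cardFixTwo p q ab.1 ab.2 hpq habne
    _ = 2 * (n - 1) * (n - 2).factorial := by
        rw [Finset.sum_const, smul_eq_mul, hA, cardAdj (by omega : 1 ≤ n)]

private def vsepQ {n : ℕ} (σ : Equiv.Perm (Fin n)) (j : Fin (n - 2)) : Prop :=
  (((σ ⟨(j : ℕ), by have := j.isLt; omega⟩).val : ℤ)
    - ((σ ⟨(j : ℕ) + 2, by have := j.isLt; omega⟩).val : ℤ)).natAbs = 1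

private instance {n : ℕ} (σ : Equiv.Perm (Fin n)) : DecidablePred (vsepQ σ) :=
  fun j => by unfold vsepQ; infer_instance

private def vsepMap {n : ℕ} (σ : Equiv.Perm (Fin n))
    (j : {j : Fin (n - 2) // vsepQ σ j}) : {k : Fin n // IsVSepPos σ k} :=
  ⟨⟨(j.1 : ℕ) + 1, by have := j.1.isLt; omega⟩,
    ⟨(j.1 : ℕ), by have := j.1.isLt; omega, rfl, j.2⟩⟩

private lemma vsepMap_bij {n : ℕ} (σ : Equiv.Perm (Fin n)) :
    Function.Bijective (vsepMap σ) := by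
  constructor
  · intro j1 j2 h
    have h2 := congrArg (fun x => ((x : {k : Fin n // IsVSepPos σ k}) : Fin n).val) h
    simp only [vsepMap] at h2
    exact Subtype.ext (Fin.ext (by omega))
  · rintro ⟨k, j, h, hk, hprf⟩
    refine ⟨⟨⟨j, by omega⟩, hprf⟩, ?_⟩
    exact Subtype.ext (Fin.ext (by simp [vsepMap, hk]))

private lemma countVal {n : ℕ} (σ : Equiv.Perm (Fin n)) :
    Nat.card {b : Fin n // IsVSepVal σ b} = (univ.filter (vsepQ σ)).card := by
  classical
  have e0 : {b : Fin n // IsVSepVal σ b} ≃ {k : Fin n // IsVSepPos σ k} :=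
    Equiv.subtypeEquiv σ⁻¹ (fun b => Iff.rfl)
  rw [Nat.card_congr (e0.trans (Equiv.ofBijective _ (vsepMap_bij σ)).symm),
    Nat.card_eq_fintype_card, Fintype.card_subtype]

private lemma totalCount {n : ℕ} (hn : 3 ≤ n) :
    ∑ σ : Equiv.Perm (Fin n), Nat.card {b : Fin n // IsVSepVal σ b}
      = (n - 2) * (2 * (n - 1) * (n - 2).factorial) := by
  classical
  calc ∑ σ : Equiv.Perm (Fin n), Nat.card {b : Fin n // IsVSepVal σ b}
      = ∑ σ : Equiv.Perm (Fin n), (univ.filter (vsepQ σ)).card :=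
        Finset.sum_congr rfl (fun σ _ => countVal σ)
    _ = ∑ σ : Equiv.Perm (Fin n), ∑ j : Fin (n - 2),
          (if vsepQ σ j then 1 else 0) := by
        refine Finset.sum_congr rfl (fun σ _ => ?_)
        rw [Finset.card_filter]
    _ = ∑ j : Fin (n - 2), ∑ σ : Equiv.Perm (Fin n),
          (if vsepQ σ j then 1 else 0) := Finset.sum_comm
    _ = ∑ j : Fin (n - 2), 2 * (n - 1) * (n - 2).factorial := by
        refine Finset.sum_congr rfl (fun j _ => ?_)
        rw [← Finset.card_filter]
        have := cardAdjPair hn (⟨(j : ℕ), by have := j.isLt; omega⟩ : Fin n)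
          (⟨(j : ℕ) + 2, by have := j.isLt; omega⟩ : Fin n)
          (by intro h; have := congrArg Fin.val h; simp at this)
        rw [← this]
        congr 1
    _ = (n - 2) * (2 * (n - 1) * (n - 2).factorial) := by
        rw [Finset.sum_const, Finset.card_univ, Fintype.card_fin, smul_eq_mul]

/-- the expected number of vertical separators of a uniformly
random permutation of `S_n` is `2(n-2)/n`. -/
theorem stmt14 {n : ℕ} (hn : 3 ≤ n) :
    (∑ σ : Equiv.Perm (Fin n), (Nat.card {b : Fin n // IsVSepVal σ b} : ℚ))
        / (n.factorial : ℚ)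
      = 2 * ((n : ℚ) - 2) / (n : ℚ) := by
  have hsum : (∑ σ : Equiv.Perm (Fin n), (Nat.card {b : Fin n // IsVSepVal σ b} : ℚ))
      = ((∑ σ : Equiv.Perm (Fin n), Nat.card {b : Fin n // IsVSepVal σ b} : ℕ) : ℚ) := by
    rw [Nat.cast_sum]
  rw [hsum, totalCount hn]
  obtain ⟨m, rfl⟩ : ∃ m, n = m + 3 := ⟨n - 3, by omega⟩
  have h2 : m + 3 - 2 = m + 1 := by omega
  have h1 : m + 3 - 1 = m + 2 := by omega
  rw [h1, h2]
  have hfac : (m + 3).factorial = (m + 3) * ((m + 2) * (m + 1).factorial) := by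
    rw [Nat.factorial_succ, Nat.factorial_succ]
  rw [hfac]
  have hne : ((m + 1).factorial : ℚ) ≠ 0 := by
    exact_mod_cast Nat.factorial_ne_zero (m + 1)
  have hne2 : ((m : ℚ) + 3) ≠ 0 := by positivity
  push_cast
  field_simp
  ring
end

section
/- Every marked permutation of S_n (a permutation together with a chosen subset of its bonds) corresponds bijectively to a pair (λ, τ) where λ = (a_1,…,a_m) is an arrowed composition of n (a composition where each part > 1 carries a direction ↑ or ↓) and τ ∈ S_m, via writing the permutation as the inflation of τ by monotone runs given by the parts of λ, with marked bonds exactly the bonds inside the runs corresponding to parts of λ. -/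
/-- Data of a decomposition of a permutation of `S_n` into `m` monotone runs:
an arrowed composition (`size` with direction `dirn`, `true` = increasing)
together with a permutation `perm ∈ S_m` giving the relative order of the runs.
A part of size `1` carries no meaningful arrow; this is normalized by
requiring `dirn = true` on such parts in the statement below. -/
structure RunData (n : ℕ) where
  m : ℕ
  size : Fin m → ℕ
  dirn : Fin m → Bool
  perm : Equiv.Perm (Fin m)
  size_pos : ∀ i, 1 ≤ size i
  sum_eq : ∑ i, size i = n

/-- Starting position of the `i`-th run. -/
noncomputable def runStart {n : ℕ} (R : RunData n) (i : Fin R.m) : ℕ :=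
  ∑ j ∈ Finset.univ.filter (fun j : Fin R.m => (j : ℕ) < (i : ℕ)), R.size j

/-- Smallest value of the `i`-th run (its value interval is determined by the
relative order `R.perm` of the runs). -/
noncomputable def runBase {n : ℕ} (R : RunData n) (i : Fin R.m) : ℕ :=
  ∑ j ∈ Finset.univ.filter (fun j : Fin R.m => R.perm j < R.perm i), R.size j

/-- `R` realizes the marked permutation `(σ, M)`: `σ` is the inflation of
`R.perm` by the monotone runs prescribed by `R`, and the marked bonds `M` are
exactly the bonds inside the runs. -/
def RealizesRun {n : ℕ} (R : RunData n) (σ : Equiv.Perm (Fin n)) (M : Set ℕ) : Prop :=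
  (∀ (i : Fin R.m) (r : ℕ), r < R.size i →
    ∀ h : runStart R i + r < n,
      (σ ⟨runStart R i + r, h⟩).val
        = runBase R i + (if R.dirn i then r else R.size i - 1 - r)) ∧
  M = {p : ℕ | ∃ (i : Fin R.m) (r : ℕ), r + 1 < R.size i ∧ p = runStart R i + r}

open Finset Function

/-!
Cut the positions `0, …, n - 1` after every unmarked position. Marked positions are bonds and
`σ` is injective, so two consecutive steps inside a segment cannot cancel: each segment is a run
of consecutive values, increasing or decreasing, hence an interval of values. These intervals
partition `[0, n)`, so the smallest value of a run is the total size of the runs whose values lie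
below it, which is `runBase` for the permutation `τ` ordering the runs by their smallest values.

Conversely, in any realizer the partial sums of the run sizes enumerate `0` and the successors of
the unmarked positions, which pins down the composition; the values of `σ` on each run then pin
down its arrow (up to the normalization on singletons) and its smallest value, hence `τ`.
-/

theorem eq_min_add_of_natAbs_sub_eq_one {f : ℕ → ℕ} {L : ℕ}
    (hstep : ∀ r, r + 1 < L → ((f (r + 1) : ℤ) - f r).natAbs = 1)
    (hne : ∀ r, r + 2 < L → f (r + 2) ≠ f r) {r : ℕ} (hr : r < L) :
    f r = min (f 0) (f (L - 1)) + if f 0 ≤ f (L - 1) then r else L - 1 - r := by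
  set d : ℤ := f 1 - f 0
  have hconst : ∀ r, r + 1 < L → (f (r + 1) : ℤ) - f r = d := by
    intro r
    induction r with
    | zero => exact fun _ => rfl
    | succ r ih =>
      intro h
      have := ih (by omega)
      have := hstep r (by omega)
      have := hstep (r + 1) h
      have : f (r + 1 + 1) ≠ f r := hne r h
      omega
  have hlin : ∀ r, r < L → (f r : ℤ) = f 0 + r * d := by
    intro r
    induction r with
    | zero => simp
    | succ r ih =>
      intro h
      have := hconst r h
      have := ih (by omega)
      push_cast
      linarith
  rcases Nat.lt_or_ge 1 L with hL | hL
  · have hd : d = 1 ∨ d = -1 := by have : d.natAbs = 1 := hstep 0 hL; omega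
    have hlast := hlin (L - 1) (by omega)
    have hr' := hlin r hr
    rcases hd with hd | hd <;> rw [hd] at hlast hr' <;> split_ifs <;> omega
  · obtain rfl : r = 0 := by omega
    have : L - 1 = 0 := by omega
    simp [this]

theorem eq_sum_of_Ico_partition {ι : Type*} [Fintype ι] {b s : ι → ℕ} (hs : ∀ i, 0 < s i)
    (hdisj : ∀ i j x, x ∈ Ico (b i) (b i + s i) → x ∈ Ico (b j) (b j + s j) → i = j)
    (hcover : ∀ i, ∀ x < b i, ∃ j, x ∈ Ico (b j) (b j + s j)) (i : ι) :
    b i = ∑ j with b j < b i, s j := by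
  have hbelow : ∀ j, b j < b i → b j + s j ≤ b i := fun j hj => by
    by_contra h
    have := hdisj j i (b i) (by simp; omega) (by simp [hs i])
    subst this
    omega
  have hrange :
      range (b i) = ({j | b j < b i} : Finset ι).biUnion fun j => Ico (b j) (b j + s j) := by
    ext x
    simp only [mem_range, mem_biUnion, mem_filter, mem_univ, true_and, mem_Ico]
    constructor
    · intro hx
      obtain ⟨j, hj⟩ := hcover i x hx
      rw [mem_Ico] at hj
      exact ⟨j, by omega, hj⟩
    · rintro ⟨j, hj, -, hx⟩
      have := hbelow j hj
      omega
  calc b i = #(range (b i)) := (card_range _).symm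
    _ = ∑ j with b j < b i, #(Ico (b j) (b j + s j)) := by
      rw [hrange, card_biUnion]
      intro j _ k _ hjk
      exact disjoint_left.mpr fun x hj hk => hjk (hdisj j k x hj hk)
    _ = ∑ j with b j < b i, s j := by simp

theorem exists_perm_lt_iff {m : ℕ} {α : Type*} [LinearOrder α] {b : Fin m → α}
    (hb : Injective b) : ∃ τ : Equiv.Perm (Fin m), ∀ i j, τ i < τ j ↔ b i < b j := by
  refine ⟨(Tuple.sort b)⁻¹, fun i j => ?_⟩
  have hmono : StrictMono (b ∘ Tuple.sort b) :=
    (Tuple.monotone_sort b).strictMono_of_injective (hb.comp (Equiv.injective _))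
  simpa using (hmono.lt_iff_lt (a := (Tuple.sort b)⁻¹ i) (b := (Tuple.sort b)⁻¹ j)).symm

theorem Equiv.Perm.eq_of_lt_iff_lt {m : ℕ} {p q : Equiv.Perm (Fin m)}
    (h : ∀ i j, p i < p j ↔ q i < q j) : p = q := by
  have hmono : StrictMono (q ∘ p.symm) := fun a b hab => by
    simpa [← h] using hab
  have hid := congrArg DFunLike.coe
    (Subsingleton.elim (hmono.orderIsoOfSurjective _ (q.surjective.comp p.symm.surjective))
      (OrderIso.refl _))
  exact Equiv.ext fun i => by simpa using (congrFun hid (p i)).symm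

theorem Fin.partialSum_injective {M : Type*} [AddMonoid M] [IsLeftCancelAdd M] {m : ℕ} :
    Injective (Fin.partialSum : (Fin m → M) → Fin (m + 1) → M) := fun f g h => by
  funext i
  have := congrFun h i.succ
  rwa [Fin.partialSum_succ, Fin.partialSum_succ, congrFun h i.castSucc, add_right_inj] at this

theorem Fin.partialSum_last {M : Type*} [AddCommMonoid M] {m : ℕ} (f : Fin m → M) :
    Fin.partialSum f (Fin.last m) = ∑ i, f i := by
  simp [Fin.partialSum, List.take_of_length_le, List.sum_ofFn]

theorem Fin.strictMono_partialSum {m : ℕ} {f : Fin m → ℕ} (hf : ∀ i, 0 < f i) :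
    StrictMono (Fin.partialSum f) :=
  Fin.strictMono_iff_lt_succ.mpr fun i => by simpa [Fin.partialSum_succ] using hf i

theorem Fin.partialSum_succ_sub_castSucc {m : ℕ} {e : Fin (m + 1) → ℕ} (he : Monotone e)
    (i : Fin (m + 1)) :
    Fin.partialSum (fun j => e j.succ - e j.castSucc) i = e i - e 0 := by
  induction i using Fin.induction with
  | zero => simp
  | succ i ih =>
    rw [Fin.partialSum_succ, ih]
    have := he (Fin.zero_le i.castSucc)
    have := he i.castSucc_lt_succ.le
    omega

section Positions

variable {n : ℕ} (R : RunData n)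

theorem runStart_eq_partialSum (i : Fin R.m) : runStart R i = Fin.partialSum R.size i.castSucc :=
  (List.sum_take_ofFn _ _).symm

theorem runStart_eq_sum_castLE (i : Fin R.m) :
    runStart R i = ∑ j : Fin i, R.size (Fin.castLE i.2.le j) := by
  have : univ.filter (fun j : Fin R.m => (j : ℕ) < i) = univ.map (Fin.castLEEmb i.2.le) := by
    ext j
    simp only [mem_filter, mem_univ, true_and, mem_map, Fin.coe_castLEEmb]
    exact ⟨fun h => ⟨⟨j, h⟩, rfl⟩, by rintro ⟨k, rfl⟩; exact k.2⟩
  rw [runStart, this, sum_map]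
  rfl

def runPos : (Σ i : Fin R.m, Fin (R.size i)) ≃ Fin n :=
  finSigmaFinEquiv.trans (finCongr R.sum_eq)

theorem runPos_val (x : Σ i : Fin R.m, Fin (R.size i)) :
    (runPos R x : ℕ) = runStart R x.1 + x.2 := by
  simp [runPos, runStart_eq_sum_castLE]

variable {R}

theorem runStart_add_lt {i : Fin R.m} {r : ℕ} (hr : r < R.size i) : runStart R i + r < n :=
  runPos_val R ⟨i, ⟨r, hr⟩⟩ ▸ (runPos R _).2

theorem runStart_add_inj {i j : Fin R.m} {r s : ℕ} (hr : r < R.size i) (hs : s < R.size j)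
    (h : runStart R i + r = runStart R j + s) : i = j ∧ r = s := by
  have := (runPos R).injective (a₁ := ⟨i, ⟨r, hr⟩⟩) (a₂ := ⟨j, ⟨s, hs⟩⟩)
    (Fin.ext (by rw [runPos_val, runPos_val]; exact h))
  rw [Sigma.mk.inj_iff] at this
  obtain ⟨rfl, hrs⟩ := this
  exact ⟨rfl, by simpa using hrs⟩

theorem exists_runStart_add_eq {k : ℕ} (hk : k < n) :
    ∃ i r, r < R.size i ∧ runStart R i + r = k := by
  obtain ⟨⟨i, r⟩, hx⟩ := (runPos R).surjective ⟨k, hk⟩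
  exact ⟨i, r, r.2, by rw [← runPos_val R ⟨i, r⟩, hx]⟩

end Positions

section Boundaries

variable {n : ℕ}

def runInterior (R : RunData n) : Set ℕ :=
  {p : ℕ | ∃ (i : Fin R.m) (r : ℕ), r + 1 < R.size i ∧ p = runStart R i + r}

open Classical in
noncomputable def runBoundaries (M : Set ℕ) (n : ℕ) : Finset ℕ :=
  insert 0 (((range n).filter (· ∉ M)).image (· + 1))

theorem mem_runBoundaries {M : Set ℕ} {x : ℕ} :
    x ∈ runBoundaries M n ↔ x = 0 ∨ ∃ p < n, p ∉ M ∧ p + 1 = x := by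
  simp [runBoundaries, and_assoc]

theorem runInterior_subset (R : RunData n) : runInterior R ⊆ {p | p + 1 < n} := by
  rintro _ ⟨i, r, hr, rfl⟩
  exact runStart_add_lt hr

theorem succ_mem_runBoundaries {M : Set ℕ} {p : ℕ} :
    p + 1 ∈ runBoundaries M n ↔ p < n ∧ p ∉ M := by
  simp [mem_runBoundaries]

theorem eq_of_runBoundaries_eq {M M' : Set ℕ} (hM : ∀ p ∈ M, p < n)
    (hM' : ∀ p ∈ M', p < n) (h : runBoundaries M n = runBoundaries M' n) : M = M' := by
  have key : ∀ {M : Set ℕ}, (∀ p ∈ M, p < n) →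
      ∀ p, p ∈ M ↔ p < n ∧ p + 1 ∉ runBoundaries M n :=
    fun hM p => by
      rw [succ_mem_runBoundaries]
      have := hM p
      tauto
  ext p
  rw [key hM, key hM', h]

theorem image_partialSum_size (R : RunData n) :
    univ.image (Fin.partialSum R.size) = runBoundaries (runInterior R) n := by
  ext x
  simp only [mem_image, mem_univ, true_and, mem_runBoundaries]
  constructor
  · rintro ⟨j, rfl⟩
    induction j using Fin.cases with
    | zero => exact Or.inl (Fin.partialSum_zero _)
    | succ i =>
      have hi := R.size_pos i
      refine Or.inr ⟨runStart R i + (R.size i - 1), runStart_add_lt (by omega), ?_, ?_⟩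
      · rintro ⟨i', r, hr, hp⟩
        obtain ⟨rfl, rfl⟩ := runStart_add_inj (by omega) (by omega) hp
        omega
      · rw [Fin.partialSum_succ, ← runStart_eq_partialSum]
        omega
  · rintro (rfl | ⟨p, hp, hpM, rfl⟩)
    · exact ⟨0, Fin.partialSum_zero _⟩
    · obtain ⟨i, r, hr, rfl⟩ := exists_runStart_add_eq (R := R) hp
      have hlast : r + 1 = R.size i := by
        by_contra hne
        exact hpM ⟨i, r, by omega, rfl⟩
      exact ⟨i.succ, by rw [Fin.partialSum_succ, ← runStart_eq_partialSum]; omega⟩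

theorem card_runBoundaries_runInterior (R : RunData n) :
    #(runBoundaries (runInterior R) n) = R.m + 1 := by
  rw [← image_partialSum_size, card_image_of_injective _
    (Fin.strictMono_partialSum R.size_pos).injective, card_univ, Fintype.card_fin]

theorem partialSum_size_eq_orderEmbOfFin {R : RunData n} {M : Set ℕ} (hM : runInterior R = M)
    (h : #(runBoundaries M n) = R.m + 1) :
    Fin.partialSum R.size = (runBoundaries M n).orderEmbOfFin h := by
  subst hM
  refine orderEmbOfFin_unique h (fun x => ?_) (Fin.strictMono_partialSum R.size_pos)
  rw [← image_partialSum_size]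
  exact mem_image_of_mem _ (mem_univ x)

theorem exists_runInterior_eq {M : Set ℕ} (hM : ∀ p ∈ M, p + 1 < n) :
    ∃ R : RunData n, runInterior R = M := by
  set c := runBoundaries M n
  have h0 : 0 ∈ c := mem_runBoundaries.mpr (Or.inl rfl)
  have hn : n ∈ c := by
    rcases Nat.eq_zero_or_pos n with rfl | hpos
    · exact h0
    · exact mem_runBoundaries.mpr
        (Or.inr ⟨n - 1, by omega, fun h => by have := hM _ h; omega, by omega⟩)
  have hle : ∀ x ∈ c, x ≤ n := fun x hx => by
    rcases mem_runBoundaries.mp hx with rfl | ⟨p, hp, -, rfl⟩ <;> omega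
  have hc : #c = (#c - 1) + 1 := (Nat.succ_pred_eq_of_pos (card_pos.mpr ⟨0, h0⟩)).symm
  set e := c.orderEmbOfFin hc
  have he0 : e 0 = 0 := by
    have := orderEmbOfFin_zero hc (Nat.succ_pos _)
    simp only [Fin.zero_eta] at this
    rw [this]
    exact Nat.le_zero.mp (min'_le _ _ h0)
  have helast : e (Fin.last _) = n := by
    rw [show e (Fin.last _) = c.max' _ from orderEmbOfFin_last hc (Nat.succ_pos _)]
    exact le_antisymm (max'_le _ _ _ hle) (le_max' _ _ hn)
  have hps : Fin.partialSum (fun i => e i.succ - e i.castSucc) = e := by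
    funext i
    rw [Fin.partialSum_succ_sub_castSucc e.monotone, he0, Nat.sub_zero]
  let R : RunData n :=
    { m := #c - 1
      size := fun i => e i.succ - e i.castSucc
      dirn := fun _ => true
      perm := 1
      size_pos := fun i => Nat.le_sub_of_add_le' (e.strictMono i.castSucc_lt_succ)
      sum_eq := by rw [← Fin.partialSum_last, hps, helast] }
  refine ⟨R, eq_of_runBoundaries_eq (n := n) (fun p hp => ?_) (fun p hp => ?_) ?_⟩
  · exact Nat.lt_of_succ_lt (runInterior_subset R hp)
  · exact Nat.lt_of_succ_lt (hM p hp)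
  · rw [← image_partialSum_size R]
    exact (congrArg (univ.image ·) hps).trans (image_orderEmbOfFin_univ c hc)

end Boundaries

section Values

variable {n : ℕ}

def permVal (σ : Equiv.Perm (Fin n)) (k : ℕ) : ℕ :=
  if h : k < n then σ ⟨k, h⟩ else 0

variable {σ : Equiv.Perm (Fin n)}

theorem permVal_of_lt {k : ℕ} (h : k < n) : permVal σ k = σ ⟨k, h⟩ := dif_pos h

theorem permVal_lt {k : ℕ} (h : k < n) : permVal σ k < n := by
  rw [permVal_of_lt h]
  exact Fin.is_lt _

theorem eq_of_permVal_eq {k l : ℕ} (hk : k < n) (hl : l < n) (h : permVal σ k = permVal σ l) :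
    k = l := by
  rw [permVal_of_lt hk, permVal_of_lt hl] at h
  simpa using σ.injective (Fin.ext h)

theorem exists_permVal_eq {x : ℕ} (hx : x < n) : ∃ k < n, permVal σ k = x :=
  ⟨σ.symm ⟨x, hx⟩, Fin.is_lt _, by rw [permVal_of_lt (Fin.is_lt _)]; simp⟩

theorem permVal_sub_natAbs_of_bond {p : ℕ} (h : p + 1 < n) (hb : PermBondAt σ p h) :
    ((permVal σ (p + 1) : ℤ) - permVal σ p).natAbs = 1 := by
  rw [permVal_of_lt h, permVal_of_lt (by omega)]
  unfold PermBondAt at hb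
  omega

end Values

section Existence

variable {n : ℕ} {σ : Equiv.Perm (Fin n)} {R : RunData n}

/-- Comparing the first with the last entry makes a run of size `1` increasing, as the
normalization in the theorem requires. -/
noncomputable def runDirn (σ : Equiv.Perm (Fin n)) (R : RunData n) (i : Fin R.m) : Bool :=
  decide (permVal σ (runStart R i) ≤ permVal σ (runStart R i + (R.size i - 1)))

noncomputable def runMin (σ : Equiv.Perm (Fin n)) (R : RunData n) (i : Fin R.m) : ℕ :=
  min (permVal σ (runStart R i)) (permVal σ (runStart R i + (R.size i - 1)))

theorem runMin_mem_Ico (i : Fin R.m) :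
    runMin σ R i ∈ Ico (runMin σ R i) (runMin σ R i + R.size i) :=
  mem_Ico.mpr ⟨le_rfl, Nat.lt_add_of_pos_right (R.size_pos i)⟩

variable (hbond : ∀ p ∈ runInterior R, ∃ h : p + 1 < n, PermBondAt σ p h)
include hbond

theorem permVal_runStart_add {i : Fin R.m} {r : ℕ} (hr : r < R.size i) :
    permVal σ (runStart R i + r)
      = runMin σ R i + if runDirn σ R i then r else R.size i - 1 - r := by
  have := eq_min_add_of_natAbs_sub_eq_one (f := fun r => permVal σ (runStart R i + r))
    (L := R.size i) (fun r hr => ?_) (fun r hr heq => ?_) hr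
  · simpa [runMin, runDirn] using this
  · obtain ⟨h, hb⟩ := hbond _ ⟨i, r, hr, rfl⟩
    exact permVal_sub_natAbs_of_bond h hb
  · have := eq_of_permVal_eq (runStart_add_lt hr) (runStart_add_lt (by omega : r < R.size i)) heq
    omega

theorem mem_Ico_runMin_iff {i : Fin R.m} {x : ℕ} :
    x ∈ Ico (runMin σ R i) (runMin σ R i + R.size i)
      ↔ ∃ r < R.size i, permVal σ (runStart R i + r) = x := by
  rw [mem_Ico]
  constructor
  · rintro ⟨h1, h2⟩
    by_cases hd : runDirn σ R i
    · refine ⟨x - runMin σ R i, by omega, ?_⟩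
      rw [permVal_runStart_add hbond (by omega), if_pos hd]
      omega
    · refine ⟨R.size i - 1 - (x - runMin σ R i), by omega, ?_⟩
      rw [permVal_runStart_add hbond (by omega), if_neg hd]
      omega
  · rintro ⟨r, hr, rfl⟩
    rw [permVal_runStart_add hbond hr]
    split_ifs <;> omega

theorem eq_of_mem_Ico_runMin {i j : Fin R.m} {x : ℕ}
    (hi : x ∈ Ico (runMin σ R i) (runMin σ R i + R.size i))
    (hj : x ∈ Ico (runMin σ R j) (runMin σ R j + R.size j)) : i = j := by
  obtain ⟨r, hr, rfl⟩ := (mem_Ico_runMin_iff hbond).mp hi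
  obtain ⟨s, hs, hrs⟩ := (mem_Ico_runMin_iff hbond).mp hj
  exact (runStart_add_inj hr hs
    (eq_of_permVal_eq (runStart_add_lt hr) (runStart_add_lt hs) hrs.symm)).1

theorem runMin_injective : Injective (runMin σ R) := fun i j h =>
  eq_of_mem_Ico_runMin hbond (runMin_mem_Ico i) (by rw [h]; exact runMin_mem_Ico j)

theorem runMin_eq_sum (i : Fin R.m) :
    runMin σ R i = ∑ j with runMin σ R j < runMin σ R i, R.size j := by
  refine eq_sum_of_Ico_partition R.size_pos (fun i j x => eq_of_mem_Ico_runMin hbond)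
    (fun i x hx => ?_) i
  obtain ⟨r, hr, hri⟩ := (mem_Ico_runMin_iff hbond).mp (runMin_mem_Ico i)
  have hxn : x < n := by
    have := permVal_lt (σ := σ) (runStart_add_lt hr)
    omega
  obtain ⟨k, hk, rfl⟩ := exists_permVal_eq (σ := σ) hxn
  obtain ⟨j, s, hs, rfl⟩ := exists_runStart_add_eq (R := R) hk
  exact ⟨j, (mem_Ico_runMin_iff hbond).mpr ⟨s, hs, rfl⟩⟩

end Existence

theorem exists_realizesRun {n : ℕ} {σ : Equiv.Perm (Fin n)} {M : Set ℕ}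
    (hM : ∀ p ∈ M, ∃ h : p + 1 < n, PermBondAt σ p h) :
    ∃ R : RunData n, (∀ i, R.size i = 1 → R.dirn i = true) ∧ RealizesRun R σ M := by
  obtain ⟨R, rfl⟩ := exists_runInterior_eq fun p hp => (hM p hp).1
  obtain ⟨τ, hτ⟩ := exists_perm_lt_iff (runMin_injective hM)
  let R' : RunData n := { R with dirn := runDirn σ R, perm := τ }
  have hbase : ∀ i, runBase R' i = runMin σ R i := fun i => by
    simp only [runBase, R', hτ]
    exact (runMin_eq_sum hM i).symm
  refine ⟨R', fun i hi => ?_, fun i r hr hlt => ?_, rfl⟩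
  · simp [R', runDirn, show R.size i = 1 from hi]
  · rw [← permVal_of_lt, hbase]
    exact permVal_runStart_add hM hr

section Uniqueness

variable {n : ℕ} {σ : Equiv.Perm (Fin n)} {M : Set ℕ} {R : RunData n}

theorem runBase_add_size_le {i j : Fin R.m} (h : R.perm i < R.perm j) :
    runBase R i + R.size i ≤ runBase R j := by
  rw [runBase, runBase, add_comm, ← sum_insert (by simp)]
  refine sum_le_sum_of_subset fun k hk => ?_
  simp only [mem_insert, mem_filter, mem_univ, true_and] at hk ⊢
  rcases hk with rfl | hk
  exacts [h, hk.trans h]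

theorem perm_lt_iff_runBase_lt (R : RunData n) (i j : Fin R.m) :
    R.perm i < R.perm j ↔ runBase R i < runBase R j := by
  have hmono : StrictMono (runBase R ∘ R.perm.symm) := fun a b hab => by
    have := runBase_add_size_le (i := R.perm.symm a) (j := R.perm.symm b) (by simpa using hab)
    have := R.size_pos (R.perm.symm a)
    simp only [comp_apply]
    omega
  simpa using (hmono.lt_iff_lt (a := R.perm i) (b := R.perm j)).symm

theorem RealizesRun.interior (h : RealizesRun R σ M) : runInterior R = M := h.2.symm

theorem RealizesRun.permVal_eq (h : RealizesRun R σ M) {i : Fin R.m} {r : ℕ}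
    (hr : r < R.size i) :
    permVal σ (runStart R i + r) = runBase R i + if R.dirn i then r else R.size i - 1 - r := by
  rw [permVal_of_lt (runStart_add_lt hr)]
  exact h.1 i r hr _

theorem RealizesRun.dirn_eq (h : RealizesRun R σ M) {i : Fin R.m} (hi : 2 ≤ R.size i) :
    R.dirn i = decide (permVal σ (runStart R i) < permVal σ (runStart R i + 1)) := by
  have h0 := h.permVal_eq (i := i) (r := 0) (by omega)
  have h1 := h.permVal_eq (i := i) (r := 1) hi
  rw [add_zero] at h0
  cases hd : R.dirn i <;> simp only [hd, if_true, Bool.false_eq_true, if_false] at h0 h1 <;>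
    simp <;> omega

theorem RealizesRun.unique {R S : RunData n}
    (hR : RealizesRun R σ M) (hRn : ∀ i, R.size i = 1 → R.dirn i = true)
    (hS : RealizesRun S σ M) (hSn : ∀ i, S.size i = 1 → S.dirn i = true) : R = S := by
  have hcardR : #(runBoundaries M n) = R.m + 1 := hR.interior ▸ card_runBoundaries_runInterior R
  have hcardS : #(runBoundaries M n) = S.m + 1 := hS.interior ▸ card_runBoundaries_runInterior S
  have hsumR := partialSum_size_eq_orderEmbOfFin hR.interior hcardR
  have hsumS := partialSum_size_eq_orderEmbOfFin hS.interior hcardS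
  obtain ⟨m, size, dirn, perm, hpos, hsum⟩ := R
  obtain ⟨m', size', dirn', perm', hpos', hsum'⟩ := S
  dsimp only at hcardR hcardS hsumR hsumS hRn hSn
  obtain rfl : m = m' := by omega
  obtain rfl : size = size' := Fin.partialSum_injective (hsumR.trans hsumS.symm)
  obtain rfl : dirn = dirn' := funext fun i => by
    rcases (hpos i).eq_or_lt with h1 | h2
    · rw [hRn i h1.symm, hSn i h1.symm]
    · exact (hR.dirn_eq h2).trans (hS.dirn_eq h2).symm
  obtain rfl : perm = perm' := by
    have hbase : ∀ i, runBase ⟨m, size, dirn, perm, hpos, hsum⟩ i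
        = runBase ⟨m, size, dirn, perm', hpos', hsum'⟩ i := fun i => by
      have hR0 := hR.permVal_eq (i := i) (hpos i)
      have hS0 := hS.permVal_eq (i := i) (hpos i)
      exact Nat.add_right_cancel (hR0.symm.trans hS0)
    refine Equiv.Perm.eq_of_lt_iff_lt fun i j => ?_
    rw [perm_lt_iff_runBase_lt ⟨m, size, dirn, perm, hpos, hsum⟩ i j, hbase, hbase,
      ← perm_lt_iff_runBase_lt]
  rfl

end Uniqueness

/-- every marked permutation (a permutation `σ` together with a
set `M` of its bonds) corresponds to a unique pair of an arrowed composition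
and a permutation of its parts, via inflation by monotone runs whose inner
bonds are exactly the marked ones. -/
theorem stmt18 {n : ℕ} (σ : Equiv.Perm (Fin n)) (M : Set ℕ)
    (hM : ∀ p ∈ M, ∃ h : p + 1 < n,
      (((σ ⟨p, by omega⟩).val : ℤ) - ((σ ⟨p + 1, h⟩).val : ℤ)).natAbs = 1) :
    ∃! R : RunData n, (∀ i, R.size i = 1 → R.dirn i = true) ∧ RealizesRun R σ M := by
  obtain ⟨R, hRn, hR⟩ := exists_realizesRun hM
  exact ⟨R, ⟨hRn, hR⟩, fun S ⟨hSn, hS⟩ => hS.unique hSn hR hRn⟩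
end
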